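/- arXiv:2502.21078 — 8 statements merged into one kernel-verified Lean document; each statement's English description precedes it below -/
import Mathlib

section
/- Let {T^k}_{k∈ℕ} be a sequence of independent Bernoulli random variables with ℙ(T^k = 1) ≥ 1 − δ ≥ 1/2 for all k. Let S^n = ∑_{k=0}^{n−1} T^k and let K be a stopping time for {S^n} with 𝔼[K] < ∞. Then for any γ ∈ (0, 1) and any E ∈ ℕ, ℙ((1 − γ)·K ≥ 2·S^K + γ(1 − γ²)·E) ≤ e^{−γ²·E}. -/
open MeasureTheory ProbabilityTheory Filter

/-!
With `λ = γ / (1 - γ²)`, the process `Mₙ = exp (λ ((1 - γ) n - 2 Sₙ))` has nonincreasing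
expectation: each factor satisfies `𝔼 exp (λ (1 - γ - 2 T)) ≤ (e^{γ/(1+γ)} + e^{-γ/(1-γ)}) / 2 ≤ 1`,
using `ℙ(T = 1) ≥ 1/2` and `e^{x/(1+x)} ≤ 1 + x`. Since `{K > n}` is independent of `Sₘ` for
`m ≥ n`, the stopped process `M_{min K n}` has nonincreasing expectation as well, so Fatou's lemma
gives `𝔼 M_K ≤ 1`. On the event of the theorem `M_K ≥ e^{λ γ (1 - γ²) E} = e^{γ² E}`, and Markov's
inequality concludes.
-/

lemma Real.exp_div_one_add_le {x : ℝ} (hx : -1 < x) : Real.exp (x / (1 + x)) ≤ 1 + x := by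
  have hpos : 0 < 1 + x := by linarith
  have h := Real.one_sub_inv_le_log_of_pos hpos
  rw [show 1 - (1 + x)⁻¹ = x / (1 + x) by field_simp; ring] at h
  calc Real.exp (x / (1 + x)) ≤ Real.exp (Real.log (1 + x)) := Real.exp_le_exp.2 h
    _ = 1 + x := Real.exp_log hpos

section Bernoulli

variable {Ω : Type*} [MeasurableSpace Ω] {μ : Measure Ω} [IsProbabilityMeasure μ] {T : Ω → ℝ}

lemma integral_comp_of_mem_zero_one (hT : Measurable T) (h01 : ∀ ω, T ω ∈ ({0, 1} : Set ℝ))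
    (f : ℝ → ℝ) :
    ∫ ω, f (T ω) ∂μ = f 0 + (f 1 - f 0) * μ.real {ω | T ω = 1} := by
  have hs : MeasurableSet {ω | T ω = 1} := hT (measurableSet_singleton 1)
  have hpt : (fun ω => f (T ω)) = fun ω => f 0 + (f 1 - f 0) * {ω | T ω = 1}.indicator 1 ω := by
    funext ω
    rcases h01 ω with h | h
    · simp [h]
    · simp [Set.mem_singleton_iff.1 h]
  rw [hpt, integral_add (integrable_const _) (((integrable_const 1).indicator hs).const_mul _),
    integral_const_mul, integral_indicator_one hs]
  simp

lemma integral_comp_le_one_of_mem_zero_one (hT : Measurable T)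
    (h01 : ∀ ω, T ω ∈ ({0, 1} : Set ℝ)) (hp : 1 / 2 ≤ μ.real {ω | T ω = 1}) {f : ℝ → ℝ}
    (hf : f 1 ≤ f 0) (hf2 : f 0 + f 1 ≤ 2) : ∫ ω, f (T ω) ∂μ ≤ 1 := by
  rw [integral_comp_of_mem_zero_one hT h01]
  nlinarith

end Bernoulli

lemma apply_min_succ_eq_add_indicator {Ω : Type*} (X : ℕ → Ω → ℝ) (K : Ω → ℕ) (n : ℕ) (ω : Ω) :
    X (min (K ω) (n + 1)) ω
      = X (min (K ω) n) ω + {ω | n < K ω}.indicator (fun ω => X (n + 1) ω - X n ω) ω := by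
  by_cases h : n < K ω
  · simp [h, min_eq_right h.le]
  · simp [h, min_eq_left (not_lt.1 h), min_eq_left (Nat.le_succ_of_le (not_lt.1 h))]

section Stopping

variable {Ω : Type*} [MeasurableSpace Ω] {μ : Measure Ω}
  {X : ℕ → Ω → ℝ} {K : Ω → ℕ}

lemma measurable_apply_stopped (hX : ∀ n, Measurable (X n)) (hK : Measurable K) :
    Measurable fun ω => X (K ω) ω :=
  (measurable_from_prod_countable_left (f := fun p : Ω × ℕ => X p.2 p.1) hX).comp
    (measurable_id.prodMk hK)

lemma ProbabilityTheory.IndepFun.integral_indicator_eq {s : Set Ω} {g : Ω → ℝ} (hs : MeasurableSet s)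
    (hg : AEStronglyMeasurable g μ) (h : IndepFun (s.indicator (1 : Ω → ℝ)) g μ) :
    ∫ ω, s.indicator g ω ∂μ = μ.real s * ∫ ω, g ω ∂μ := by
  have : s.indicator g = s.indicator 1 * g := by
    funext ω; by_cases hω : ω ∈ s <;> simp [hω]
  rw [this, h.integral_mul_eq_mul_integral
    (measurable_const.indicator hs).aestronglyMeasurable hg, integral_indicator_one hs]

lemma integrable_stopped_min (hXi : ∀ n, Integrable (X n) μ) (hK : Measurable K) (n : ℕ) :
    Integrable (fun ω => X (min (K ω) n) ω) μ := by
  induction n with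
  | zero => simpa using hXi 0
  | succ n ih =>
    simp_rw [apply_min_succ_eq_add_indicator X K n]
    exact ih.add (((hXi (n + 1)).sub (hXi n)).indicator (hK measurableSet_Ioi))

lemma integral_apply_min_succ_eq_add_indicator_le (hXi : ∀ n, Integrable (X n) μ) (hK : Measurable K) {n : ℕ}
    (hanti : ∫ ω, X (n + 1) ω ∂μ ≤ ∫ ω, X n ω ∂μ)
    (hind : ∀ m, n ≤ m → IndepFun ({ω | n < K ω}.indicator (1 : Ω → ℝ)) (X m) μ) :
    ∫ ω, X (min (K ω) (n + 1)) ω ∂μ ≤ ∫ ω, X (min (K ω) n) ω ∂μ := by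
  have hs : MeasurableSet {ω | n < K ω} := hK measurableSet_Ioi
  have hdiff : Integrable (fun ω => {ω | n < K ω}.indicator (X (n + 1)) ω
      - {ω | n < K ω}.indicator (X n) ω) μ := ((hXi (n + 1)).indicator hs).sub ((hXi n).indicator hs)
  simp_rw [apply_min_succ_eq_add_indicator X K n, Set.indicator_sub]
  rw [integral_add (integrable_stopped_min hXi hK n) hdiff,
    integral_sub ((hXi (n + 1)).indicator hs) ((hXi n).indicator hs),
    (hind (n + 1) n.le_succ).integral_indicator_eq hs (hXi (n + 1)).1,
    (hind n le_rfl).integral_indicator_eq hs (hXi n).1]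
  nlinarith [measureReal_nonneg (μ := μ) (s := {ω | n < K ω})]

lemma lintegral_ofReal_stopped_le (hXm : ∀ n, Measurable (X n)) (hXi : ∀ n, Integrable (X n) μ)
    (hX0 : ∀ n ω, 0 ≤ X n ω) (hanti : Antitone fun n => ∫ ω, X n ω ∂μ) (hK : Measurable K)
    (hind : ∀ n m, n ≤ m → IndepFun ({ω | n < K ω}.indicator (1 : Ω → ℝ)) (X m) μ) :
    ∫⁻ ω, ENNReal.ofReal (X (K ω) ω) ∂μ ≤ ENNReal.ofReal (∫ ω, X 0 ω ∂μ) := by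
  have hmin (n : ℕ) : ∫ ω, X (min (K ω) n) ω ∂μ ≤ ∫ ω, X 0 ω ∂μ := by
    induction n with
    | zero => simp
    | succ n ih =>
      exact (integral_apply_min_succ_eq_add_indicator_le hXi hK (hanti n.le_succ) (hind n)).trans ih
  have hlim (ω : Ω) : ENNReal.ofReal (X (K ω) ω)
      = liminf (fun n => ENNReal.ofReal (X (min (K ω) n) ω)) atTop :=
    (tendsto_atTop_of_eventually_const (i₀ := K ω) fun n hn => by
      rw [min_eq_left hn]).liminf_eq.symm
  simp_rw [hlim]
  refine (lintegral_liminf_le fun n =>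
    (measurable_apply_stopped hXm (hK.min measurable_const)).ennreal_ofReal).trans ?_
  refine liminf_le_of_frequently_le' (Frequently.of_forall fun n => ?_)
  rw [← ofReal_integral_eq_lintegral_ofReal (integrable_stopped_min hXi hK n)
    (Eventually.of_forall fun ω => hX0 _ ω)]
  exact ENNReal.ofReal_le_ofReal (hmin n)

end Stopping

lemma measureReal_le_exp_neg_of_lintegral_le_one {Ω : Type*} [MeasurableSpace Ω]
    {μ : Measure Ω} {f : Ω → ℝ} (hf : Measurable f)
    (h : ∫⁻ ω, ENNReal.ofReal (f ω) ∂μ ≤ 1) (t : ℝ) :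
    μ.real {ω | Real.exp t ≤ f ω} ≤ Real.exp (-t) := by
  have hmarkov := meas_ge_le_lintegral_div (μ := μ) hf.ennreal_ofReal.aemeasurable
    (ENNReal.ofReal_pos.2 (Real.exp_pos t)).ne' ENNReal.ofReal_ne_top
  have hle : μ {ω | Real.exp t ≤ f ω} ≤ ENNReal.ofReal (Real.exp (-t)) :=
    calc μ {ω | Real.exp t ≤ f ω}
        ≤ μ {ω | ENNReal.ofReal (Real.exp t) ≤ ENNReal.ofReal (f ω)} :=
          measure_mono fun ω hω => ENNReal.ofReal_le_ofReal hω
      _ ≤ 1 / ENNReal.ofReal (Real.exp t) := hmarkov.trans (ENNReal.div_le_div_right h _)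
      _ = ENNReal.ofReal (Real.exp (-t)) := by
        rw [one_div, ← ENNReal.ofReal_inv_of_pos (Real.exp_pos t), Real.exp_neg]
  exact ENNReal.toReal_le_of_le_ofReal (Real.exp_pos _).le hle

noncomputable def chernoffProcess {Ω : Type*} (γ : ℝ) (S : ℕ → Ω → ℝ) (n : ℕ) (ω : Ω) : ℝ :=
  Real.exp (γ / (1 - γ ^ 2) * ((1 - γ) * n - 2 * S n ω))

namespace chernoffProcess

variable {Ω : Type*} {S : ℕ → Ω → ℝ} {γ : ℝ}

lemma pos (n : ℕ) (ω : Ω) : 0 < chernoffProcess γ S n ω := Real.exp_pos _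

lemma zero (hS : ∀ ω, S 0 ω = 0) (ω : Ω) : chernoffProcess γ S 0 ω = 1 := by
  simp [chernoffProcess, hS]

lemma exp_sq_mul_le (hγ : γ ∈ Set.Ioo (0 : ℝ) 1) {n : ℕ} {ω : Ω} {E : ℝ}
    (h : (1 - γ) * (n : ℝ) ≥ 2 * S n ω + γ * (1 - γ ^ 2) * E) :
    Real.exp (γ ^ 2 * E) ≤ chernoffProcess γ S n ω := by
  have hsq : 0 < 1 - γ ^ 2 := by nlinarith [hγ.1, hγ.2]
  have hl : γ / (1 - γ ^ 2) * (γ * (1 - γ ^ 2) * E) = γ ^ 2 * E := by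
    field_simp
  refine Real.exp_le_exp.2 ?_
  rw [← hl]
  exact mul_le_mul_of_nonneg_left (by linarith) (div_nonneg hγ.1.le hsq.le)

lemma succ (T : ℕ → Ω → ℝ) (hS : ∀ n ω, S n ω = ∑ k ∈ Finset.range n, T k ω) (n : ℕ) (ω : Ω) :
    chernoffProcess γ S (n + 1) ω
      = chernoffProcess γ S n ω * Real.exp (γ / (1 - γ ^ 2) * (1 - γ - 2 * T n ω)) := by
  rw [chernoffProcess, chernoffProcess, ← Real.exp_add, hS, hS, Finset.sum_range_succ]
  push_cast
  ring_nf

variable [MeasurableSpace Ω] {μ : Measure Ω}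

lemma measurable_comp (γ : ℝ) (n : ℕ) :
    Measurable fun s : ℝ => Real.exp (γ / (1 - γ ^ 2) * ((1 - γ) * n - 2 * s)) := by
  fun_prop

lemma measurable (hS : ∀ n, Measurable (S n)) (n : ℕ) : Measurable (chernoffProcess γ S n) :=
  (measurable_comp γ n).comp (hS n)

lemma integrable [IsFiniteMeasure μ] (hγ : γ ∈ Set.Ioo (0 : ℝ) 1) (hSm : ∀ n, Measurable (S n))
    (hS : ∀ n ω, 0 ≤ S n ω) (n : ℕ) : Integrable (chernoffProcess γ S n) μ := by
  have hl : 0 ≤ γ / (1 - γ ^ 2) := div_nonneg hγ.1.le (by nlinarith [hγ.1, hγ.2])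
  refine .of_bound (measurable hSm n).aestronglyMeasurable
    (Real.exp (γ / (1 - γ ^ 2) * ((1 - γ) * n))) (.of_forall fun ω => ?_)
  rw [Real.norm_of_nonneg (pos n ω).le]
  exact Real.exp_le_exp.2 (mul_le_mul_of_nonneg_left (by linarith [hS n ω]) hl)

lemma integral_exp_increment_le_one [IsProbabilityMeasure μ] (hγ : γ ∈ Set.Ioo (0 : ℝ) 1)
    {T : Ω → ℝ} (hT : Measurable T) (h01 : ∀ ω, T ω ∈ ({0, 1} : Set ℝ))
    (hp : 1 / 2 ≤ μ.real {ω | T ω = 1}) :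
    ∫ ω, Real.exp (γ / (1 - γ ^ 2) * (1 - γ - 2 * T ω)) ∂μ ≤ 1 := by
  obtain ⟨h0, h1⟩ := hγ
  have hsq : 1 - γ ^ 2 ≠ 0 := by nlinarith
  have hne : (1 : ℝ) + -γ ≠ 0 := by linarith
  refine integral_comp_le_one_of_mem_zero_one
    (f := fun t => Real.exp (γ / (1 - γ ^ 2) * (1 - γ - 2 * t))) hT h01 hp
    (Real.exp_le_exp.2 (mul_le_mul_of_nonneg_left (by linarith) (div_nonneg h0.le (by nlinarith))))
    ?_
  have hzero : γ / (1 - γ ^ 2) * (1 - γ - 2 * 0) = γ / (1 + γ) := by field_simp; ring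
  have hone : γ / (1 - γ ^ 2) * (1 - γ - 2 * 1) = -γ / (1 + -γ) := by field_simp; ring
  rw [hzero, hone]
  linarith [Real.exp_div_one_add_le (x := γ) (by linarith),
    Real.exp_div_one_add_le (x := -γ) (by linarith)]

lemma antitone_integral [IsProbabilityMeasure μ] (hγ : γ ∈ Set.Ioo (0 : ℝ) 1)
    {T : ℕ → Ω → ℝ} (hTm : ∀ k, Measurable (T k)) (hindep : iIndepFun T μ)
    (h01 : ∀ k ω, T k ω ∈ ({0, 1} : Set ℝ)) (hp : ∀ k, 1 / 2 ≤ μ.real {ω | T k ω = 1})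
    (hS : ∀ n ω, S n ω = ∑ k ∈ Finset.range n, T k ω) (hSm : ∀ n, Measurable (S n)) :
    Antitone fun n => ∫ ω, chernoffProcess γ S n ω ∂μ := by
  set l := γ / (1 - γ ^ 2)
  have hSsum (n : ℕ) : S n = ∑ k ∈ Finset.range n, T k := by
    funext ω; rw [hS, Finset.sum_apply]
  refine antitone_nat_of_succ_le fun n => ?_
  have hindep_n : IndepFun (chernoffProcess γ S n) (fun ω => Real.exp (l * (1 - γ - 2 * T n ω))) μ :=
    (hSsum n ▸ hindep.indepFun_finsetSum_of_notMem hTm Finset.notMem_range_self).comp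
      (measurable_comp γ n) (show Measurable fun t => Real.exp (l * (1 - γ - 2 * t)) by fun_prop)
  simp_rw [succ T hS n]
  rw [hindep_n.integral_fun_mul_eq_mul_integral (measurable hSm n).aestronglyMeasurable
    (by fun_prop)]
  exact mul_le_of_le_one_right (integral_nonneg fun ω => (pos n ω).le)
    (integral_exp_increment_le_one hγ (hTm n) (h01 n) (hp n))

end chernoffProcess

theorem stmt_2_general {Ω : Type*} [MeasurableSpace Ω] (μ : Measure Ω) [IsProbabilityMeasure μ]
    (T : ℕ → Ω → ℝ) (hmeas : ∀ k, Measurable (T k))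
    (hindep : iIndepFun T μ)
    (hBer : ∀ k ω, T k ω ∈ ({0, 1} : Set ℝ))
    (δ : ℝ) (hδ : 1 - δ ≥ 1 / 2)
    (hp : ∀ k, (μ {ω | T k ω = 1}).toReal ≥ 1 - δ)
    (S : ℕ → Ω → ℝ) (hS : ∀ n ω, S n ω = ∑ k ∈ Finset.range n, T k ω)
    (K : Ω → ℕ) (hKmeas : Measurable K)
    (hstop : ∀ k n : ℕ, k ≤ n →
      IndepFun (fun ω => Set.indicator {ω' | k < K ω'} (fun _ => (1 : ℝ)) ω) (S n) μ)
    (γ : ℝ) (hγ : γ ∈ Set.Ioo (0 : ℝ) 1) (E : ℕ) :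
    (μ {ω | (1 - γ) * (K ω : ℝ) ≥ 2 * S (K ω) ω + γ * (1 - γ ^ 2) * (E : ℝ)}).toReal
      ≤ Real.exp (-γ ^ 2 * (E : ℝ)) := by
  have hT0 (k : ℕ) (ω : Ω) : 0 ≤ T k ω := by
    rcases hBer k ω with h | h <;> simp_all
  have hSm (n : ℕ) : Measurable (S n) := by
    rw [funext (hS n)]; exact Finset.measurable_sum _ fun k _ => hmeas k
  have hS0 (n : ℕ) (ω : Ω) : 0 ≤ S n ω := hS n ω ▸ Finset.sum_nonneg fun k _ => hT0 k ω
  have hstopped : ∫⁻ ω, ENNReal.ofReal (chernoffProcess γ S (K ω) ω) ∂μ ≤ 1 := by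
    simpa [chernoffProcess.zero (γ := γ) (S := S) (fun ω => by simp [hS])] using
      lintegral_ofReal_stopped_le (chernoffProcess.measurable hSm)
        (chernoffProcess.integrable hγ hSm hS0) (fun n ω => (chernoffProcess.pos n ω).le)
        (chernoffProcess.antitone_integral hγ hmeas hindep hBer (fun k => hδ.trans (hp k)) hS hSm)
        hKmeas fun n m hnm => (hstop n m hnm).comp measurable_id (chernoffProcess.measurable_comp γ m)
  calc (μ {ω | (1 - γ) * (K ω : ℝ) ≥ 2 * S (K ω) ω + γ * (1 - γ ^ 2) * (E : ℝ)}).toReal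
      ≤ μ.real {ω | Real.exp (γ ^ 2 * E) ≤ chernoffProcess γ S (K ω) ω} :=
        measureReal_mono fun ω hω => chernoffProcess.exp_sq_mul_le hγ hω
    _ ≤ Real.exp (-(γ ^ 2 * E)) := measureReal_le_exp_neg_of_lintegral_le_one
        (measurable_apply_stopped (chernoffProcess.measurable hSm) hKmeas) hstopped _
    _ = Real.exp (-γ ^ 2 * (E : ℝ)) := by ring_nf

/-- Chernoff bound for stopping times. -/
theorem stmt_2 {Ω : Type*} [MeasurableSpace Ω] (μ : Measure Ω) [IsProbabilityMeasure μ]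
    (T : ℕ → Ω → ℝ) (hmeas : ∀ k, Measurable (T k))
    (hindep : iIndepFun T μ)
    (hBer : ∀ k ω, T k ω ∈ ({0, 1} : Set ℝ))
    (δ : ℝ) (hδ : 1 - δ ≥ 1 / 2)
    (hp : ∀ k, (μ {ω | T k ω = 1}).toReal ≥ 1 - δ)
    (S : ℕ → Ω → ℝ) (hS : ∀ n ω, S n ω = ∑ k ∈ Finset.range n, T k ω)
    (K : Ω → ℕ) (hKmeas : Measurable K)
    (hstop : ∀ k n : ℕ, k ≤ n →
      IndepFun (fun ω => Set.indicator {ω' | k < K ω'} (fun _ => (1 : ℝ)) ω) (S n) μ)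
    (hKint : Integrable (fun ω => (K ω : ℝ)) μ)
    (γ : ℝ) (hγ : γ ∈ Set.Ioo (0 : ℝ) 1) (E : ℕ) :
    (μ {ω | (1 - γ) * (K ω : ℝ) ≥ 2 * S (K ω) ω + γ * (1 - γ ^ 2) * (E : ℝ)}).toReal
      ≤ Real.exp (-γ ^ 2 * (E : ℝ)) :=
  stmt_2_general μ T hmeas hindep hBer δ hδ hp S hS K hKmeas hstop γ hγ E
end

section
/- Let {T^k}_{k∈ℕ} be a sequence of independent Bernoulli random variables with ℙ(T^k = 1) ≥ 1 − δ ≥ 1/2 for all k. Let S^n = ∑_{k=0}^{n−1} T^k and let K be a stopping time for {S^n} with 𝔼[K] < ∞. Then for any γ ∈ (0, 1), ℙ((1 − γ)·K ≥ 2·S^K + γ(1 − γ²)·𝔼[K]) ≤ e^{−γ²·𝔼[K]}. -/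
open MeasureTheory ProbabilityTheory Real
open scoped ENNReal

/-!
For a fixed `n`, the Chernoff bound with `e^t = (1 - γ) / (1 + γ)` gives
`ℙ(2 S^n ≤ (1 - γ) n - γ (1 - γ²) E) ≤ e^{-γ² E}` for every `E ≥ 0`: for `n < γ (1 + γ) E` the
event is empty, and otherwise the exponent is controlled by `x - 1 ≤ x log x` at `x = 1 ± γ`.
The event of the theorem is the union over `k` of `{K = k} ∩ {2 S^k ≤ …}`, and
`{K = k} = {K > k - 1} \ {K > k}` is independent of `S^k` because both of these sets are, so its
probability is at most `∑ₖ ℙ(K = k) e^{-γ² E} = e^{-γ² E}`.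
-/

lemma chernoff_exponent_le {γ E x : ℝ} (hγ0 : 0 < γ) (hγ1 : γ < 1) (hE : 0 ≤ E)
    (hx : γ * (1 + γ) * E ≤ x) :
    log ((1 + γ) / (1 - γ)) * (((1 - γ) * x - γ * (1 - γ ^ 2) * E) / 2) - x * log (1 + γ)
      ≤ -γ ^ 2 * E := by
  have hplus := self_sub_one_le_mul_log (x := 1 + γ) (by linarith)
  have hminus := self_sub_one_le_mul_log (x := 1 - γ) (by linarith)
  have hsum : 0 ≤ (1 + γ) * log (1 + γ) + (1 - γ) * log (1 - γ) := by linarith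
  rw [log_div (by linarith) (by linarith)]
  nlinarith [mul_le_mul_of_nonneg_right hx hsum,
    mul_le_mul_of_nonneg_left hplus (mul_nonneg hγ0.le hE)]

lemma exp_mul_eq_of_mem_zero_one {Ω : Type*} {X : Ω → ℝ} (h01 : ∀ ω, X ω ∈ ({0, 1} : Set ℝ))
    (t : ℝ) :
    (fun ω => exp (t * X ω)) = fun ω => 1 + (exp t - 1) * {ω | X ω = 1}.indicator 1 ω := by
  funext ω
  obtain h | h : X ω = 0 ∨ X ω = 1 := h01 ω <;> simp [h]

section

variable {Ω : Type*} [MeasurableSpace Ω] {μ : Measure Ω}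

lemma mgf_eq_of_mem_zero_one [IsProbabilityMeasure μ] {X : Ω → ℝ} (hX : Measurable X)
    (h01 : ∀ ω, X ω ∈ ({0, 1} : Set ℝ)) (t : ℝ) :
    mgf X μ t = 1 + (exp t - 1) * μ.real {ω | X ω = 1} := by
  have hA : MeasurableSet {ω | X ω = 1} := hX (measurableSet_singleton 1)
  rw [mgf, exp_mul_eq_of_mem_zero_one h01, integral_add (integrable_const 1)
    (((integrable_const 1).indicator hA).const_mul _), integral_const_mul,
    integral_indicator_one hA]
  simp

lemma integrable_exp_mul_of_mem_zero_one [IsFiniteMeasure μ] {X : Ω → ℝ} (hX : Measurable X)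
    (h01 : ∀ ω, X ω ∈ ({0, 1} : Set ℝ)) (t : ℝ) : Integrable (fun ω => exp (t * X ω)) μ := by
  rw [exp_mul_eq_of_mem_zero_one h01]
  exact (integrable_const 1).add
    (((integrable_const 1).indicator (hX (measurableSet_singleton 1))).const_mul _)

lemma measureReal_sum_le_le_of_mem_zero_one [IsProbabilityMeasure μ] {ι : Type*}
    {T : ι → Ω → ℝ} (hmeas : ∀ i, Measurable (T i)) (hindep : iIndepFun T μ)
    (h01 : ∀ i ω, T i ω ∈ ({0, 1} : Set ℝ)) {p : ℝ} (hp : ∀ i, p ≤ μ.real {ω | T i ω = 1})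
    {t : ℝ} (ht : t ≤ 0) (s : Finset ι) (a : ℝ) :
    μ.real {ω | ∑ i ∈ s, T i ω ≤ a} ≤ exp (-t * a) * (1 + (exp t - 1) * p) ^ s.card := by
  have hint := hindep.integrable_exp_mul_sum hmeas (s := s)
    fun i _ => integrable_exp_mul_of_mem_zero_one (μ := μ) (hmeas i) (h01 i) t
  have hchernoff := measure_le_le_exp_mul_mgf (X := ∑ i ∈ s, T i) a ht hint
  simp only [Finset.sum_apply] at hchernoff
  refine hchernoff.trans (mul_le_mul_of_nonneg_left ?_ (exp_nonneg _))
  rw [hindep.mgf_sum hmeas, ← Finset.prod_const]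
  refine Finset.prod_le_prod (fun i _ => mgf_nonneg) fun i _ => ?_
  rw [mgf_eq_of_mem_zero_one (hmeas i) (h01 i)]
  have : exp t - 1 ≤ 0 := by linarith [exp_le_one_iff.2 ht]
  nlinarith [hp i]

lemma measureReal_sum_le_le_exp_of_half [IsProbabilityMeasure μ] {T : ℕ → Ω → ℝ}
    (hmeas : ∀ i, Measurable (T i)) (hindep : iIndepFun T μ)
    (h01 : ∀ i ω, T i ω ∈ ({0, 1} : Set ℝ)) (hp : ∀ i, 1 / 2 ≤ μ.real {ω | T i ω = 1})
    {γ : ℝ} (hγ0 : 0 < γ) (hγ1 : γ < 1) (n : ℕ) (a : ℝ) :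
    μ.real {ω | ∑ i ∈ Finset.range n, T i ω ≤ a}
      ≤ exp (log ((1 + γ) / (1 - γ)) * a - n * log (1 + γ)) := by
  have hL : 0 ≤ log ((1 + γ) / (1 - γ)) :=
    log_nonneg ((one_le_div (by linarith)).2 (by linarith))
  have hfactor : 1 + (exp (-log ((1 + γ) / (1 - γ))) - 1) * (1 / 2) = exp (-log (1 + γ)) := by
    rw [exp_neg, exp_neg, exp_log (by positivity), exp_log (by linarith)]
    field_simp
    ring
  have h := measureReal_sum_le_le_of_mem_zero_one hmeas hindep h01 hp (neg_nonpos.2 hL)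
    (Finset.range n) a
  rwa [hfactor, neg_neg, Finset.card_range, ← exp_nat_mul, ← exp_add, mul_neg,
    ← sub_eq_add_neg] at h

lemma measureReal_sum_le_chernoff [IsProbabilityMeasure μ] {T : ℕ → Ω → ℝ}
    (hmeas : ∀ i, Measurable (T i)) (hindep : iIndepFun T μ)
    (h01 : ∀ i ω, T i ω ∈ ({0, 1} : Set ℝ)) (hp : ∀ i, 1 / 2 ≤ μ.real {ω | T i ω = 1})
    {γ E : ℝ} (hγ0 : 0 < γ) (hγ1 : γ < 1) (hE : 0 ≤ E) (n : ℕ) :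
    μ.real {ω | ∑ i ∈ Finset.range n, T i ω ≤ ((1 - γ) * n - γ * (1 - γ ^ 2) * E) / 2}
      ≤ exp (-γ ^ 2 * E) := by
  by_cases hn : γ * (1 + γ) * E ≤ n
  · exact (measureReal_sum_le_le_exp_of_half hmeas hindep h01 hp hγ0 hγ1 n _).trans
      (exp_le_exp.2 (chernoff_exponent_le hγ0 hγ1 hE hn))
  · have hempty : {ω | ∑ i ∈ Finset.range n, T i ω ≤ ((1 - γ) * n - γ * (1 - γ ^ 2) * E) / 2}
        = ∅ := by
      refine Set.eq_empty_of_forall_notMem fun ω hω => ?_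
      have hsum : 0 ≤ ∑ i ∈ Finset.range n, T i ω := Finset.sum_nonneg fun i _ => by
        obtain h | h : T i ω = 0 ∨ T i ω = 1 := h01 i ω <;> simp [h]
      have hneg := mul_lt_mul_of_pos_left (not_le.1 hn) (sub_pos.2 hγ1)
      simp only [Set.mem_ofPred_eq] at hω
      nlinarith
    rw [hempty, measureReal_empty]
    exact (exp_pos _).le

lemma measure_inter_eq_mul_of_disjoint_union [IsFiniteMeasure μ] {A B C : Set Ω}
    (hAB : Disjoint A B) (hB : MeasurableSet B) (hC : MeasurableSet C)
    (hunion : μ ((A ∪ B) ∩ C) = μ (A ∪ B) * μ C) (hBC : μ (B ∩ C) = μ B * μ C) :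
    μ (A ∩ C) = μ A * μ C := by
  rw [Set.union_inter_distrib_right,
    measure_union (hAB.mono Set.inter_subset_left Set.inter_subset_left) (hB.inter hC),
    measure_union hAB hB, add_mul, ← hBC] at hunion
  exact WithTop.add_right_cancel (measure_ne_top μ _) hunion

lemma measure_fiber_inter_eq_mul_of_forall_lt [IsProbabilityMeasure μ] {K : Ω → ℕ}
    (hK : Measurable K) {C : Set Ω} (hC : MeasurableSet C) (k : ℕ)
    (h : ∀ j ≤ k, μ ({ω | j < K ω} ∩ C) = μ {ω | j < K ω} * μ C) :
    μ ({ω | K ω = k} ∩ C) = μ {ω | K ω = k} * μ C := by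
  have hunion : {ω | K ω = k} ∪ {ω | k < K ω} = {ω | k ≤ K ω} := by
    ext ω; simp only [Set.mem_union, Set.mem_ofPred_eq]; omega
  refine measure_inter_eq_mul_of_disjoint_union (B := {ω | k < K ω}) ?_ (hK measurableSet_Ioi)
    hC ?_ (h k le_rfl)
  · exact Set.disjoint_left.2 fun ω h1 h2 => by simp_all
  rw [hunion]
  cases k with
  | zero => simp
  | succ j =>
    simp only [Nat.succ_le_iff]
    exact h j j.le_succ

lemma measure_setOf_mem_le_of_le_mul [IsProbabilityMeasure μ] {K : Ω → ℕ} (hK : Measurable K)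
    (A : ℕ → Set Ω) {b : ℝ≥0∞} (h : ∀ k, μ ({ω | K ω = k} ∩ A k) ≤ μ {ω | K ω = k} * b) :
    μ {ω | ω ∈ A (K ω)} ≤ b := by
  have hset : {ω | ω ∈ A (K ω)} = ⋃ k, {ω | K ω = k} ∩ A k := by
    ext ω; simp
  have hfibers : ∑' k, μ {ω | K ω = k} = 1 := by
    rw [← measure_iUnion (f := fun k => {ω | K ω = k})
      (fun i j hij => Set.disjoint_left.2 fun ω h1 h2 => hij (h1.symm.trans h2))
      fun k => hK (measurableSet_singleton k), Set.iUnion_eq_univ_iff.2 fun ω => ⟨K ω, rfl⟩,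
      measure_univ]
  calc μ {ω | ω ∈ A (K ω)} ≤ ∑' k, μ ({ω | K ω = k} ∩ A k) := hset ▸ measure_iUnion_le _
    _ ≤ ∑' k, μ {ω | K ω = k} * b := ENNReal.tsum_le_tsum h
    _ = b := by rw [ENNReal.tsum_mul_right, hfibers, one_mul]

lemma ProbabilityTheory.IndepFun.measure_inter_preimage_eq_mul_of_indicator {β : Type*}
    [MeasurableSpace β] {A : Set Ω} {Y : Ω → β}
    (h : IndepFun (fun ω => A.indicator (fun _ => (1 : ℝ)) ω) Y μ)
    {B : Set β} (hB : MeasurableSet B) : μ (A ∩ Y ⁻¹' B) = μ A * μ (Y ⁻¹' B) :=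
  (IndepSets_iff _ _ μ).1 (_root_.IndepFun.singleton_indepSets_of_indicator h) _ _ rfl ⟨B, hB, rfl⟩

end

theorem stmt_3_general {Ω : Type*} [MeasurableSpace Ω] (μ : Measure Ω) [IsProbabilityMeasure μ]
    (T : ℕ → Ω → ℝ) (hmeas : ∀ k, Measurable (T k))
    (hindep : iIndepFun T μ)
    (hBer : ∀ k ω, T k ω ∈ ({0, 1} : Set ℝ))
    (δ : ℝ) (hδ : 1 - δ ≥ 1 / 2)
    (hp : ∀ k, (μ {ω | T k ω = 1}).toReal ≥ 1 - δ)
    (S : ℕ → Ω → ℝ) (hS : ∀ n ω, S n ω = ∑ k ∈ Finset.range n, T k ω)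
    (K : Ω → ℕ) (hKmeas : Measurable K)
    (hstop : ∀ k n : ℕ, k ≤ n →
      IndepFun (fun ω => Set.indicator {ω' | k < K ω'} (fun _ => (1 : ℝ)) ω) (S n) μ)
    (γ : ℝ) (hγ : γ ∈ Set.Ioo (0 : ℝ) 1) :
    (μ {ω | (1 - γ) * (K ω : ℝ)
        ≥ 2 * S (K ω) ω + γ * (1 - γ ^ 2) * ∫ ω', (K ω' : ℝ) ∂μ}).toReal
      ≤ Real.exp (-γ ^ 2 * ∫ ω', (K ω' : ℝ) ∂μ) := by
  set E := ∫ ω', (K ω' : ℝ) ∂μ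
  have hE : 0 ≤ E := integral_nonneg fun _ => Nat.cast_nonneg _
  have hhalf : ∀ k, 1 / 2 ≤ μ.real {ω | T k ω = 1} := fun k => by
    rw [measureReal_def]; linarith [hp k]
  let A : ℕ → Set Ω := fun k => {ω | S k ω ≤ ((1 - γ) * k - γ * (1 - γ ^ 2) * E) / 2}
  have hevent : {ω | (1 - γ) * (K ω : ℝ) ≥ 2 * S (K ω) ω + γ * (1 - γ ^ 2) * E}
      = {ω | ω ∈ A (K ω)} := by
    ext ω
    simp only [A, Set.mem_ofPred_eq]
    constructor <;> intro h <;> linarith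
  rw [hevent]
  refine ENNReal.toReal_le_of_le_ofReal (exp_nonneg _)
    (measure_setOf_mem_le_of_le_mul hKmeas A fun k => ?_)
  have hA : MeasurableSet (A k) := by
    simp only [A, hS]
    exact measurableSet_le (Finset.measurable_sum _ fun i _ => hmeas i) measurable_const
  rw [measure_fiber_inter_eq_mul_of_forall_lt hKmeas hA k fun j hj =>
    (hstop j k hj).measure_inter_preimage_eq_mul_of_indicator measurableSet_Iic]
  refine mul_le_mul_right ((ENNReal.le_ofReal_iff_toReal_le (measure_ne_top μ _)
    (exp_nonneg _)).2 ?_) _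
  have := measureReal_sum_le_chernoff hmeas hindep hBer hhalf hγ.1 hγ.2 hE k
  simpa [A, hS, measureReal_def] using this

/-- Chernoff bound for stopping times, with `E = 𝔼[K]`. -/
theorem stmt_3 {Ω : Type*} [MeasurableSpace Ω] (μ : Measure Ω) [IsProbabilityMeasure μ]
    (T : ℕ → Ω → ℝ) (hmeas : ∀ k, Measurable (T k))
    (hindep : iIndepFun T μ)
    (hBer : ∀ k ω, T k ω ∈ ({0, 1} : Set ℝ))
    (δ : ℝ) (hδ : 1 - δ ≥ 1 / 2)
    (hp : ∀ k, (μ {ω | T k ω = 1}).toReal ≥ 1 - δ)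
    (S : ℕ → Ω → ℝ) (hS : ∀ n ω, S n ω = ∑ k ∈ Finset.range n, T k ω)
    (K : Ω → ℕ) (hKmeas : Measurable K)
    (hstop : ∀ k n : ℕ, k ≤ n →
      IndepFun (fun ω => Set.indicator {ω' | k < K ω'} (fun _ => (1 : ℝ)) ω) (S n) μ)
    (hKint : Integrable (fun ω => (K ω : ℝ)) μ)
    (γ : ℝ) (hγ : γ ∈ Set.Ioo (0 : ℝ) 1) :
    (μ {ω | (1 - γ) * (K ω : ℝ)
        ≥ 2 * S (K ω) ω + γ * (1 - γ ^ 2) * ∫ ω', (K ω' : ℝ) ∂μ}).toReal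
      ≤ Real.exp (-γ ^ 2 * ∫ ω', (K ω' : ℝ) ∂μ) :=
  stmt_3_general μ T hmeas hindep hBer δ hδ hp S hS K hKmeas hstop γ hγ
end

section
/- Let f : ℝⁿ → ℝ, g : ℝⁿ → ℝⁿ, let ρ, τ, ε > 0, let f̄ ∈ ℝ, let S ∈ ℕ, let x⁰, x¹, …, x^{S+1} ∈ ℝⁿ and t⁰, …, t^S ∈ {0, 1}. Assume that for every k ≤ S: f(x^k) − f(x^{k+1}) ≥ t^k · ρ · ‖x^{k+1} − x^k‖² and ‖x^{k+1} − x^k‖ ≥ t^k · τ · ‖g(x^k)‖; assume f(x^{S+1}) ≥ f̄ and ‖g(x^n)‖ > ε for all n ≤ S. Then ∑_{k=0}^{S} t^k ≤ (f(x⁰) − f̄) / (ρ·(τ·ε)²). -/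
/-- Bound on the number of true successful iterations. -/
theorem stmt_8 {n : ℕ}
    (f : EuclideanSpace ℝ (Fin n) → ℝ)
    (g : EuclideanSpace ℝ (Fin n) → EuclideanSpace ℝ (Fin n))
    (ρ τ ε : ℝ) (hρ : 0 < ρ) (hτ : 0 < τ) (hε : 0 < ε)
    (fbar : ℝ) (S : ℕ)
    (x : ℕ → EuclideanSpace ℝ (Fin n))
    (t : ℕ → ℝ) (ht : ∀ k, t k ∈ ({0, 1} : Set ℝ))
    (hdec : ∀ k ≤ S, f (x k) - f (x (k + 1)) ≥ t k * ρ * ‖x (k + 1) - x k‖ ^ 2)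
    (hstep : ∀ k ≤ S, ‖x (k + 1) - x k‖ ≥ t k * τ * ‖g (x k)‖)
    (hfbar : f (x (S + 1)) ≥ fbar)
    (hgrad : ∀ n' ≤ S, ‖g (x n')‖ > ε) :
    ∑ k ∈ Finset.range (S + 1), t k ≤ (f (x 0) - fbar) / (ρ * (τ * ε) ^ 2) := by
  set c : ℝ := ρ * (τ * ε) ^ 2 with hc
  have hcpos : 0 < c := by positivity
  have key : ∀ k ≤ S, t k * c ≤ f (x k) - f (x (k + 1)) := by
    intro k hk
    rcases ht k with h0 | h1
    · rw [h0, zero_mul]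
      have := hdec k hk
      rw [h0, zero_mul, zero_mul] at this
      linarith
    · simp only [Set.mem_singleton_iff] at h1
      rw [h1, one_mul]
      have hd := hdec k hk
      have hs := hstep k hk
      rw [h1, one_mul] at hs hd
      have hg := hgrad k hk
      have h2 : τ * ε ≤ ‖x (k + 1) - x k‖ := by
        calc τ * ε ≤ τ * ‖g (x k)‖ := by nlinarith
        _ ≤ _ := hs
      have : (τ * ε) ^ 2 ≤ ‖x (k + 1) - x k‖ ^ 2 := by
        apply pow_le_pow_left₀ (by positivity) h2
      nlinarith
  have hsum : (∑ k ∈ Finset.range (S + 1), t k) * c ≤ f (x 0) - f (x (S + 1)) := by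
    rw [Finset.sum_mul]
    calc ∑ k ∈ Finset.range (S + 1), t k * c
        ≤ ∑ k ∈ Finset.range (S + 1), (f (x k) - f (x (k + 1))) := by
          apply Finset.sum_le_sum
          intro k hk
          exact key k (Nat.lt_succ_iff.mp (Finset.mem_range.mp hk))
      _ = f (x 0) - f (x (S + 1)) := by
          rw [← Finset.sum_range_sub' (fun k => f (x k))]
  rw [le_div_iff₀ hcpos]
  calc (∑ k ∈ Finset.range (S + 1), t k) * c ≤ f (x 0) - f (x (S + 1)) := hsum
    _ ≤ f (x 0) - fbar := by linarith
end

section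
/- Let f : ℝⁿ → ℝ, g : ℝⁿ → ℝⁿ, let ρ, τ > 0, let f̄ ∈ ℝ, let S ∈ ℕ, let x⁰, x¹, …, x^{S+1} ∈ ℝⁿ and t⁰, …, t^S ∈ {0, 1}. Assume that for every k ≤ S: f(x^k) − f(x^{k+1}) ≥ t^k · ρ · ‖x^{k+1} − x^k‖² and ‖x^{k+1} − x^k‖ ≥ t^k · τ · ‖g(x^k)‖; assume f(x^{S+1}) ≥ f̄. If T_S := ∑_{k=0}^{S} t^k > 0, then min_{n ≤ S} ‖g(x^n)‖ ≤ √( (f(x⁰) − f̄) / (T_S · ρ · τ²) ). -/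
/-- Bound on the minimal gradient norm in terms of the number of true successful
iterations. -/
theorem stmt_9 {n : ℕ}
    (f : EuclideanSpace ℝ (Fin n) → ℝ)
    (g : EuclideanSpace ℝ (Fin n) → EuclideanSpace ℝ (Fin n))
    (ρ τ : ℝ) (hρ : 0 < ρ) (hτ : 0 < τ)
    (fbar : ℝ) (S : ℕ)
    (x : ℕ → EuclideanSpace ℝ (Fin n))
    (t : ℕ → ℝ) (ht : ∀ k, t k ∈ ({0, 1} : Set ℝ))
    (hdec : ∀ k ≤ S, f (x k) - f (x (k + 1)) ≥ t k * ρ * ‖x (k + 1) - x k‖ ^ 2)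
    (hstep : ∀ k ≤ S, ‖x (k + 1) - x k‖ ≥ t k * τ * ‖g (x k)‖)
    (hfbar : f (x (S + 1)) ≥ fbar)
    (hTS : 0 < ∑ k ∈ Finset.range (S + 1), t k) :
    (Finset.range (S + 1)).inf' (Finset.nonempty_range_iff.mpr (Nat.succ_ne_zero S))
        (fun n' => ‖g (x n')‖)
      ≤ Real.sqrt ((f (x 0) - fbar) / ((∑ k ∈ Finset.range (S + 1), t k) * ρ * τ ^ 2)) := by
  set m := (Finset.range (S + 1)).inf' (Finset.nonempty_range_iff.mpr (Nat.succ_ne_zero S))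
      (fun n' => ‖g (x n')‖) with hm
  have hm0 : 0 ≤ m := by
    obtain ⟨i, hi, hieq⟩ := Finset.exists_mem_eq_inf' (Finset.nonempty_range_iff.mpr
      (Nat.succ_ne_zero S)) (fun n' => ‖g (x n')‖)
    rw [hm, hieq]; exact norm_nonneg _
  have key : ∀ k ∈ Finset.range (S + 1), t k * (ρ * τ ^ 2 * m ^ 2) ≤
      f (x k) - f (x (k + 1)) := by
    intro k hk
    rw [Finset.mem_range, Nat.lt_succ_iff] at hk
    rcases ht k with h0 | h1
    · rw [h0, zero_mul]
      have hd := hdec k hk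
      rw [h0, zero_mul, zero_mul] at hd
      linarith
    · simp only [Set.mem_singleton_iff] at h1
      rw [h1, one_mul]
      have hs := hstep k hk
      rw [h1, one_mul] at hs
      have hd := hdec k hk
      rw [h1, one_mul] at hd
      have hmk : m ≤ ‖g (x k)‖ :=
        Finset.inf'_le _ (Finset.mem_range.mpr (Nat.lt_succ_of_le hk))
      have h2 : τ * m ≤ ‖x (k + 1) - x k‖ :=
        le_trans (mul_le_mul_of_nonneg_left hmk hτ.le) hs
      have h3 : (τ * m) ^ 2 ≤ ‖x (k + 1) - x k‖ ^ 2 :=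
        pow_le_pow_left₀ (by positivity) h2 2
      nlinarith
  have hsum : (∑ k ∈ Finset.range (S + 1), t k) * (ρ * τ ^ 2 * m ^ 2) ≤
      f (x 0) - f (x (S + 1)) := by
    rw [Finset.sum_mul]
    calc ∑ k ∈ Finset.range (S + 1), t k * (ρ * τ ^ 2 * m ^ 2)
        ≤ ∑ k ∈ Finset.range (S + 1), (f (x k) - f (x (k + 1))) :=
          Finset.sum_le_sum key
      _ = f (x 0) - f (x (S + 1)) := by
          rw [← Finset.sum_range_sub' (fun k => f (x k))]
  have hpos : 0 < (∑ k ∈ Finset.range (S + 1), t k) * ρ * τ ^ 2 :=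
    mul_pos (mul_pos hTS hρ) (by positivity)
  have hm2 : m ^ 2 ≤ (f (x 0) - fbar) / ((∑ k ∈ Finset.range (S + 1), t k) * ρ * τ ^ 2) := by
    rw [le_div_iff₀ hpos]
    nlinarith
  calc m ≤ Real.sqrt (m ^ 2) := by rw [Real.sqrt_sq hm0]
    _ ≤ _ := Real.sqrt_le_sqrt hm2
end

section
/- Let {T^k}_{k∈ℕ} be a sequence of independent Bernoulli random variables with ℙ(T^k = 1) ≥ 1 − δ ≥ 1/2 for all k. Let S^n = ∑_{k=0}^{n−1} T^k and let K be a stopping time for {S^n} with 𝔼[K] < ∞. Assume there is a constant B ≥ 0 with S^K ≤ B almost surely. Then for any γ ∈ (0, 1), ℙ( K ≥ ((2 + γ(1 − γ²)) / ((1 − γ)(1 − δ))) · B ) ≤ e^{−γ²·𝔼[K]}. -/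
/-!
Since `{K > k}` is independent of both `S^k` and `S^{k+1}`, it is independent of `T^k` in mean:
`𝔼[1{K > k} T^k] = ℙ(K > k) 𝔼[T^k]`. Summing over `k` gives the Wald-type bound
`(1 - δ) 𝔼[K] ≤ 𝔼[S^K] ≤ B`, so `𝔼[K] ≤ 2B`. With `c` the constant in the threshold, on the event
`K ≥ n := ⌈c B⌉` we have `S^n ≤ S^K ≤ B`, and the Chernoff bound with `e^{-t} = 1 - γ` gives
`ℙ(S^n ≤ B) ≤ (1 - γ)^{-B} e^{-γ (1 - δ) n}`; `c` is chosen so that this is at most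
`e^{-2γ²B} ≤ e^{-γ² 𝔼[K]}`.
-/

open MeasureTheory ProbabilityTheory Finset Filter Topology Real

lemma nonneg_of_mem_zero_one {x : ℝ} (hx : x ∈ ({0, 1} : Set ℝ)) : 0 ≤ x := by
  rcases hx with rfl | rfl <;> norm_num

section Bernoulli

variable {Ω : Type*} [MeasurableSpace Ω] {μ : Measure Ω} {X : Ω → ℝ}

lemma integrable_of_mem_zero_one [IsFiniteMeasure μ] (hXm : Measurable X)
    (hX : ∀ ω, X ω ∈ ({0, 1} : Set ℝ)) : Integrable X μ :=
  .of_bound hXm.aestronglyMeasurable 1 <| ae_of_all _ fun ω => by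
    rcases hX ω with h | h <;> simp_all

lemma integral_of_mem_zero_one (hXm : Measurable X) (hX : ∀ ω, X ω ∈ ({0, 1} : Set ℝ)) :
    ∫ ω, X ω ∂μ = μ.real {ω | X ω = 1} := by
  rw [← integral_indicator_one (s := {ω | X ω = 1}) (hXm (measurableSet_singleton 1))]
  congr 1 with ω
  rcases hX ω with h | h <;> simp_all

lemma mgf_of_mem_zero_one [IsProbabilityMeasure μ] (hXm : Measurable X)
    (hX : ∀ ω, X ω ∈ ({0, 1} : Set ℝ)) (t : ℝ) :
    mgf X μ t = 1 + (exp t - 1) * ∫ ω, X ω ∂μ := by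
  have hlin : ∀ ω, exp (t * X ω) = 1 + (exp t - 1) * X ω := fun ω => by
    rcases hX ω with h | h <;> simp_all
  simp_rw [mgf, hlin]
  rw [integral_add (integrable_const 1) ((integrable_of_mem_zero_one hXm hX).const_mul _),
    integral_const_mul]
  simp

theorem measureReal_sum_le_le_exp [IsProbabilityMeasure μ] {T : ℕ → Ω → ℝ}
    (hTm : ∀ k, Measurable (T k)) (hindep : iIndepFun T μ)
    (hT : ∀ k ω, T k ω ∈ ({0, 1} : Set ℝ)) {p : ℝ} (hp : ∀ k, p ≤ ∫ ω, T k ω ∂μ)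
    {t : ℝ} (ht : 0 ≤ t) (n : ℕ) (B : ℝ) :
    μ.real {ω | ∑ k ∈ range n, T k ω ≤ B} ≤ exp (t * B - n * p * (1 - exp (-t))) := by
  have hint : Integrable (fun ω => exp (-t * (∑ k ∈ range n, T k) ω)) μ := by
    refine .of_bound (by fun_prop) 1 (ae_of_all _ fun ω => ?_)
    have : 0 ≤ (∑ k ∈ range n, T k) ω := by
      rw [Finset.sum_apply]; exact sum_nonneg fun k _ => nonneg_of_mem_zero_one (hT k ω)
    rw [norm_of_nonneg (exp_nonneg _), exp_le_one_iff]
    nlinarith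
  have hfactor : ∀ k, mgf (T k) μ (-t) ≤ exp (-(p * (1 - exp (-t)))) := fun k => by
    have : 0 ≤ 1 - exp (-t) := sub_nonneg.2 (exp_le_one_iff.2 (neg_nonpos.2 ht))
    rw [mgf_of_mem_zero_one (hTm k) (hT k)]
    nlinarith [add_one_le_exp (-(p * (1 - exp (-t)))), hp k]
  calc μ.real {ω | ∑ k ∈ range n, T k ω ≤ B}
      ≤ exp (t * B) * mgf (∑ k ∈ range n, T k) μ (-t) := by
        simpa [Finset.sum_apply] using measure_le_le_exp_mul_mgf B (neg_nonpos.2 ht) hint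
    _ = exp (t * B) * ∏ k ∈ range n, mgf (T k) μ (-t) := by rw [hindep.mgf_sum hTm]
    _ ≤ exp (t * B) * ∏ _k ∈ range n, exp (-(p * (1 - exp (-t)))) := by
        gcongr with k
        · exact fun k _ => mgf_nonneg
        · exact hfactor k
    _ = exp (t * B - n * p * (1 - exp (-t))) := by
        rw [prod_const, card_range, ← exp_nat_mul, ← exp_add]
        ring_nf

end Bernoulli

lemma sum_range_ite_lt {M : Type*} [AddCommMonoid M] (f : ℕ → M) (N m : ℕ) :
    ∑ k ∈ range N, (if k < m then f k else 0) = ∑ k ∈ range (min N m), f k := by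
  rw [← sum_filter]
  congr 1 with k
  simp

section StoppingTime

variable {Ω : Type*} [MeasurableSpace Ω] {μ : Measure Ω} {T : ℕ → Ω → ℝ} {K : Ω → ℕ}

lemma tendsto_sum_measureReal_lt [IsFiniteMeasure μ] (hK : Measurable K)
    (hKint : Integrable (fun ω => (K ω : ℝ)) μ) :
    Tendsto (fun N => ∑ k ∈ range N, μ.real {ω | k < K ω}) atTop (𝓝 (∫ ω, (K ω : ℝ) ∂μ)) := by
  have hmin : ∀ N, ∑ k ∈ range N, μ.real {ω | k < K ω} = ∫ ω, ((min N (K ω) : ℕ) : ℝ) ∂μ := by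
    intro N
    rw [← sum_congr rfl fun k _ => integral_indicator_one (measurableSet_lt measurable_const hK),
      ← integral_finsetSum _ fun k _ =>
        Integrable.indicator (f := 1) (integrable_const 1) (measurableSet_lt measurable_const hK)]
    congr 1 with ω
    simp only [Set.indicator_apply, Set.mem_ofPred_eq, Pi.one_apply, sum_range_ite_lt]
    simp
  simp_rw [hmin]
  refine tendsto_integral_of_dominated_convergence _ (fun N => by fun_prop) hKint
    (fun N => ae_of_all _ fun ω => ?_) (ae_of_all _ fun ω => ?_)
  · simp only [Nat.cast_min, norm_eq_abs]
    rw [abs_of_nonneg (by positivity)]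
    exact min_le_right _ _
  · refine tendsto_const_nhds.congr' ?_
    filter_upwards [eventually_ge_atTop (K ω)] with N hN
    rw [min_eq_right hN]

lemma integrable_indicator_one_mul {s : Set Ω} (hs : MeasurableSet s) {f : Ω → ℝ}
    (hf : Integrable f μ) : Integrable (fun ω => s.indicator (1 : Ω → ℝ) ω * f ω) μ := by
  simpa [← Set.indicator_mul_left] using hf.indicator hs

lemma integral_indicator_lt_mul_eq (hT : ∀ k, Integrable (T k) μ) (hK : Measurable K)
    (hstop : ∀ k n : ℕ, k ≤ n →
      IndepFun ({ω | k < K ω}.indicator (1 : Ω → ℝ)) (fun ω => ∑ j ∈ range n, T j ω) μ) (k : ℕ) :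
    ∫ ω, {ω | k < K ω}.indicator (1 : Ω → ℝ) ω * T k ω ∂μ
      = μ.real {ω | k < K ω} * ∫ ω, T k ω ∂μ := by
  set g : Ω → ℝ := {ω | k < K ω}.indicator (1 : Ω → ℝ)
  have hg : AEStronglyMeasurable g μ :=
    (measurable_one.indicator (measurableSet_lt measurable_const hK)).aestronglyMeasurable
  have hS : ∀ n, Integrable (fun ω => ∑ j ∈ range n, T j ω) μ := fun n =>
    integrable_finsetSum _ fun j _ => hT j
  have hgS : ∀ n, Integrable (fun ω => g ω * ∑ j ∈ range n, T j ω) μ := fun n =>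
    integrable_indicator_one_mul (measurableSet_lt measurable_const hK) (hS n)
  have hfactor : ∀ n, k ≤ n → ∫ ω, g ω * ∑ j ∈ range n, T j ω ∂μ
      = (∫ ω, g ω ∂μ) * ∫ ω, ∑ j ∈ range n, T j ω ∂μ := fun n hn =>
    (hstop k n hn).integral_mul_eq_mul_integral hg (hS n).1
  calc ∫ ω, g ω * T k ω ∂μ
      = ∫ ω, (g ω * ∑ j ∈ range (k + 1), T j ω - g ω * ∑ j ∈ range k, T j ω) ∂μ := by
        congr 1 with ω
        rw [sum_range_succ]
        ring
    _ = (∫ ω, g ω ∂μ)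
          * ((∫ ω, ∑ j ∈ range (k + 1), T j ω ∂μ) - ∫ ω, ∑ j ∈ range k, T j ω ∂μ) := by
        rw [integral_sub (hgS _) (hgS _), hfactor _ k.le_succ, hfactor _ le_rfl, mul_sub]
    _ = μ.real {ω | k < K ω} * ∫ ω, T k ω ∂μ := by
        rw [integral_indicator_one (measurableSet_lt measurable_const hK),
          integral_finsetSum _ fun j _ => hT j, integral_finsetSum _ fun j _ => hT j,
          sum_range_succ, add_sub_cancel_left]

theorem mul_integral_le_of_ae_stopped_sum_le [IsProbabilityMeasure μ]
    (hT : ∀ k, Integrable (T k) μ) (hT0 : ∀ k ω, 0 ≤ T k ω) {p : ℝ}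
    (hp : ∀ k, p ≤ ∫ ω, T k ω ∂μ) (hK : Measurable K)
    (hstop : ∀ k n : ℕ, k ≤ n →
      IndepFun ({ω | k < K ω}.indicator (1 : Ω → ℝ)) (fun ω => ∑ j ∈ range n, T j ω) μ)
    (hKint : Integrable (fun ω => (K ω : ℝ)) μ) {B : ℝ}
    (hSK : ∀ᵐ ω ∂μ, ∑ k ∈ range (K ω), T k ω ≤ B) :
    p * ∫ ω, (K ω : ℝ) ∂μ ≤ B := by
  refine le_of_tendsto' ((tendsto_sum_measureReal_lt hK hKint).const_mul p) fun N => ?_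
  have hstopped :
      ∀ᵐ ω ∂μ, ∑ k ∈ range N, {ω | k < K ω}.indicator (1 : Ω → ℝ) ω * T k ω ≤ B := by
    filter_upwards [hSK] with ω hω
    simp only [Set.indicator_apply, Set.mem_ofPred_eq, Pi.one_apply, ite_mul, one_mul, zero_mul,
      sum_range_ite_lt]
    exact (sum_le_sum_of_subset_of_nonneg (range_subset_range.2 (min_le_right _ _))
      fun k _ _ => hT0 k ω).trans hω
  have hint : ∀ k, Integrable (fun ω => {ω | k < K ω}.indicator (1 : Ω → ℝ) ω * T k ω) μ :=
    fun k => integrable_indicator_one_mul (measurableSet_lt measurable_const hK) (hT k)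
  calc p * ∑ k ∈ range N, μ.real {ω | k < K ω}
      = ∑ k ∈ range N, μ.real {ω | k < K ω} * p := by rw [mul_sum]; simp_rw [mul_comm]
    _ ≤ ∑ k ∈ range N, μ.real {ω | k < K ω} * ∫ ω, T k ω ∂μ := by
        gcongr with k; exact hp k
    _ = ∫ ω, ∑ k ∈ range N, {ω | k < K ω}.indicator (1 : Ω → ℝ) ω * T k ω ∂μ := by
        rw [integral_finsetSum _ fun k _ => hint k]
        exact sum_congr rfl fun k _ => (integral_indicator_lt_mul_eq hT hK hstop k).symm
    _ ≤ ∫ _, B ∂μ := integral_mono_ae (integrable_finsetSum _ fun k _ => hint k)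
          (integrable_const B) hstopped
    _ = B := by simp

end StoppingTime

lemma neg_log_mul_sub_le {γ p B E n : ℝ} (hγ0 : 0 < γ) (hγ1 : γ < 1) (hp : 1 / 2 ≤ p)
    (hB : 0 ≤ B) (hE : p * E ≤ B) (hn : (2 + γ * (1 - γ ^ 2)) / ((1 - γ) * p) * B ≤ n) :
    -log (1 - γ) * B - n * p * γ ≤ -γ ^ 2 * E := by
  have h1γ : 0 < 1 - γ := sub_pos.2 hγ1
  have hlog : -log (1 - γ) * (1 - γ) ≤ γ := by
    calc -log (1 - γ) * (1 - γ) ≤ ((1 - γ)⁻¹ - 1) * (1 - γ) := by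
          gcongr; linarith [one_sub_inv_le_log_of_pos h1γ]
      _ = γ := by field_simp; ring
  have hn' : (2 + γ * (1 - γ ^ 2)) * B ≤ n * ((1 - γ) * p) := by
    rwa [div_mul_eq_mul_div, div_le_iff₀ (by positivity)] at hn
  have hE2 : E ≤ 2 * B := by nlinarith
  have hcubic : 0 ≤ 1 - γ + 2 * γ ^ 2 - γ ^ 3 := by nlinarith [mul_nonneg (sq_nonneg γ) h1γ.le]
  suffices (1 - γ) * (-log (1 - γ) * B - n * p * γ) ≤ (1 - γ) * (-γ ^ 2 * E) from
    le_of_mul_le_mul_left this h1γ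
  nlinarith [mul_le_mul_of_nonneg_right hlog hB, mul_le_mul_of_nonneg_right hn' hγ0.le,
    mul_le_mul_of_nonneg_left hE2 (by positivity : 0 ≤ γ ^ 2 * (1 - γ)),
    mul_nonneg (mul_nonneg hγ0.le hB) hcubic]

/-- High-probability bound on a stopping time whose partial sums are bounded. -/
theorem stmt_11 {Ω : Type*} [MeasurableSpace Ω] (μ : Measure Ω) [IsProbabilityMeasure μ]
    (T : ℕ → Ω → ℝ) (hmeas : ∀ k, Measurable (T k))
    (hindep : iIndepFun T μ)
    (hBer : ∀ k ω, T k ω ∈ ({0, 1} : Set ℝ))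
    (δ : ℝ) (hδ : 1 - δ ≥ 1 / 2)
    (hp : ∀ k, (μ {ω | T k ω = 1}).toReal ≥ 1 - δ)
    (S : ℕ → Ω → ℝ) (hS : ∀ n ω, S n ω = ∑ k ∈ Finset.range n, T k ω)
    (K : Ω → ℕ) (hKmeas : Measurable K)
    (hstop : ∀ k n : ℕ, k ≤ n →
      IndepFun (fun ω => Set.indicator {ω' | k < K ω'} (fun _ => (1 : ℝ)) ω) (S n) μ)
    (hKint : Integrable (fun ω => (K ω : ℝ)) μ)
    (B : ℝ) (hB : 0 ≤ B) (hSK : ∀ᵐ ω ∂μ, S (K ω) ω ≤ B)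
    (γ : ℝ) (hγ : γ ∈ Set.Ioo (0 : ℝ) 1) :
    (μ {ω | (K ω : ℝ) ≥ ((2 + γ * (1 - γ ^ 2)) / ((1 - γ) * (1 - δ))) * B}).toReal
      ≤ Real.exp (-γ ^ 2 * ∫ ω', (K ω' : ℝ) ∂μ) := by
  obtain rfl : S = fun n ω => ∑ k ∈ range n, T k ω := funext fun n => funext (hS n)
  have hmean : ∀ k, 1 - δ ≤ ∫ ω, T k ω ∂μ := fun k => by
    rw [integral_of_mem_zero_one (hmeas k) (hBer k)]; exact hp k
  have hwald : (1 - δ) * ∫ ω, (K ω : ℝ) ∂μ ≤ B :=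
    mul_integral_le_of_ae_stopped_sum_le (fun k => integrable_of_mem_zero_one (hmeas k) (hBer k))
      (fun k ω => nonneg_of_mem_zero_one (hBer k ω)) hmean hKmeas hstop hKint hSK
  set n := ⌈(2 + γ * (1 - γ ^ 2)) / ((1 - γ) * (1 - δ)) * B⌉₊
  have hsub : μ {ω | (K ω : ℝ) ≥ (2 + γ * (1 - γ ^ 2)) / ((1 - γ) * (1 - δ)) * B}
      ≤ μ {ω | ∑ k ∈ range n, T k ω ≤ B} := by
    refine measure_mono_ae ?_
    filter_upwards [hSK] with ω hω hKω
    exact (sum_le_sum_of_subset_of_nonneg (range_subset_range.2 (Nat.ceil_le.2 hKω))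
      fun k _ _ => nonneg_of_mem_zero_one (hBer k ω)).trans hω
  have hchernoff := measureReal_sum_le_le_exp hmeas hindep hBer hmean
    (neg_nonneg.2 (log_nonpos (sub_nonneg.2 hγ.2.le) (sub_le_self _ hγ.1.le))) n B
  rw [neg_neg, exp_log (sub_pos.2 hγ.2), sub_sub_cancel] at hchernoff
  calc (μ _).toReal ≤ μ.real {ω | ∑ k ∈ range n, T k ω ≤ B} :=
        ENNReal.toReal_mono (measure_ne_top _ _) hsub
    _ ≤ exp (-log (1 - γ) * B - n * (1 - δ) * γ) := hchernoff
    _ ≤ exp (-γ ^ 2 * ∫ ω, (K ω : ℝ) ∂μ) :=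
        exp_le_exp.2 (neg_log_mul_sub_le hγ.1 hγ.2 hδ hB hwald (Nat.le_ceil _))
end

section
/- Let f : ℝⁿ → ℝ, g : ℝⁿ → ℝⁿ, ρ, τ > 0, f̄ ∈ ℝ, L ≥ 0, δ ∈ [0, 1/2], and N ∈ ℕ. Let {T^k}_{k<N} be independent Bernoulli random variables with ℙ(T^k = 1) ≥ 1 − δ, and let {X^k}_{k ≤ N} be a random sequence in ℝⁿ such that almost surely, for every k < N: f(X^k) − f(X^{k+1}) ≥ T^k · ρ · ‖X^{k+1} − X^k‖² and ‖X^{k+1} − X^k‖ ≥ T^k · τ · ‖g(X^k)‖; assume f ≥ f̄ everywhere, X⁰ = x⁰ is deterministic, and almost surely at most L of the indices k < N satisfy both T^k = 1 and X^{k+1} = X^k. Then for any γ ∈ (0, 1) with (1 − γ)(1 − δ)N − L > 0, ℙ( min_{n ≤ N} ‖g(X^n)‖ ≥ √( (f(x⁰) − f̄) / (ρ·τ²·((1 − γ)(1 − δ)N − L)) ) ) ≤ e^{−N(1 − δ)γ²/2}. -/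
open scoped Classical

open MeasureTheory ProbabilityTheory

/-!
Let `c = √((f x⁰ - f̄) / (ρ τ² M))` with `M = (1 - γ)(1 - δ)N - L`. If `‖g (X k)‖ ≥ c` for all `k`,
every step with `T k = 1` that moves decreases `f` by at least `ρ τ² c²`, while the total decrease
is at most `f x⁰ - f̄ = ρ τ² c² M`. Hence at most `M` such steps occur and, with the at most `L`
stationary ones, `∑ T k ≤ (1 - γ)(1 - δ)N`. Hoeffding's inequality for the independent Bernoulli
variables `T k`, whose means are at least `1 - δ ≥ 1/2`, bounds the probability of this event.
-/

open Finset in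
lemma card_le_of_sum_le_mul {ι : Type*} {s : Finset ι} {a : ι → ℝ} {q M : ℝ} (hM : 0 ≤ M)
    (hpos : ∀ i ∈ s, 0 < a i) (hq : ∀ i ∈ s, q ≤ a i) (hsum : ∑ i ∈ s, a i ≤ q * M) :
    (#s : ℝ) ≤ M := by
  rcases s.eq_empty_or_nonempty with rfl | hs
  · simpa using hM
  have hq₀ : 0 < q := pos_of_mul_pos_left ((sum_pos hpos hs).trans_le hsum) hM
  have : #s * q ≤ q * M := by simpa using (card_nsmul_le_sum s a q hq).trans hsum
  nlinarith

section Descent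

open Finset

variable {E F : Type*} [NormedAddCommGroup E] [NormedAddCommGroup F] [DecidableEq E]
  {f : E → ℝ} {g : E → F} {x : ℕ → E} {t : ℕ → ℝ} {ρ τ c M fbar : ℝ} {N : ℕ}

lemma card_filter_eq_one_and_ne_le (hρ : 0 < ρ) (hτ : 0 ≤ τ) (hc : 0 ≤ c) (hM : 0 ≤ M)
    (ht : ∀ k, 0 ≤ t k)
    (hdec : ∀ k < N, t k * ρ * ‖x (k + 1) - x k‖ ^ 2 ≤ f (x k) - f (x (k + 1)))
    (hstep : ∀ k < N, t k * τ * ‖g (x k)‖ ≤ ‖x (k + 1) - x k‖)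
    (hg : ∀ k < N, c ≤ ‖g (x k)‖) (hfbar : fbar ≤ f (x N))
    (hgap : f (x 0) - fbar ≤ ρ * τ ^ 2 * c ^ 2 * M) :
    (#{k ∈ range N | t k = 1 ∧ x (k + 1) ≠ x k} : ℝ) ≤ M := by
  have hmem {k} (hk : k ∈ {k ∈ range N | t k = 1 ∧ x (k + 1) ≠ x k}) :
      k < N ∧ ρ * ‖x (k + 1) - x k‖ ^ 2 ≤ f (x k) - f (x (k + 1)) ∧
        τ * ‖g (x k)‖ ≤ ‖x (k + 1) - x k‖ ∧ x (k + 1) ≠ x k := by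
    obtain ⟨hkN, htk, hmove⟩ := by simpa using hk
    have hd := hdec k hkN
    have hs := hstep k hkN
    rw [htk, one_mul] at hd hs
    exact ⟨hkN, hd, hs, hmove⟩
  refine card_le_of_sum_le_mul (a := fun k => f (x k) - f (x (k + 1)))
    (q := ρ * τ ^ 2 * c ^ 2) hM (fun k hk => ?_) (fun k hk => ?_) ?_
  · obtain ⟨-, hd, -, hmove⟩ := hmem hk
    exact (mul_pos hρ (pow_pos (norm_pos_iff.2 (sub_ne_zero.2 hmove)) 2)).trans_le hd
  · obtain ⟨hkN, hd, hs, -⟩ := hmem hk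
    have hτc : τ * c ≤ ‖x (k + 1) - x k‖ := (mul_le_mul_of_nonneg_left (hg k hkN) hτ).trans hs
    calc ρ * τ ^ 2 * c ^ 2 = ρ * (τ * c) ^ 2 := by ring
      _ ≤ ρ * ‖x (k + 1) - x k‖ ^ 2 := by gcongr
      _ ≤ _ := hd
  · calc ∑ k ∈ range N with t k = 1 ∧ x (k + 1) ≠ x k, (f (x k) - f (x (k + 1)))
        ≤ ∑ k ∈ range N, (f (x k) - f (x (k + 1))) :=
          sum_le_sum_of_subset_of_nonneg (filter_subset _ _) fun k hk _ =>
            (by have := ht k; positivity : 0 ≤ t k * ρ * ‖x (k + 1) - x k‖ ^ 2).trans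
              (hdec k (mem_range.1 hk))
      _ = f (x 0) - f (x N) := sum_range_sub' (fun k => f (x k)) N
      _ ≤ ρ * τ ^ 2 * c ^ 2 * M := by linarith

lemma sum_range_le_of_forall_le_norm (h01 : ∀ k, t k ∈ ({0, 1} : Set ℝ)) (hρ : 0 < ρ)
    (hτ : 0 ≤ τ) (hc : 0 ≤ c) (hM : 0 ≤ M)
    (hdec : ∀ k < N, t k * ρ * ‖x (k + 1) - x k‖ ^ 2 ≤ f (x k) - f (x (k + 1)))
    (hstep : ∀ k < N, t k * τ * ‖g (x k)‖ ≤ ‖x (k + 1) - x k‖)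
    (hg : ∀ k < N, c ≤ ‖g (x k)‖) (hfbar : fbar ≤ f (x N))
    (hgap : f (x 0) - fbar ≤ ρ * τ ^ 2 * c ^ 2 * M) {L : ℝ}
    (hL : (#{k ∈ range N | t k = 1 ∧ x (k + 1) = x k} : ℝ) ≤ L) :
    ∑ k ∈ range N, t k ≤ M + L := by
  have ht : ∀ k, 0 ≤ t k := fun k => by
    obtain h | h : t k = 0 ∨ t k = 1 := h01 k <;> simp [h]
  have hmove := card_filter_eq_one_and_ne_le hρ hτ hc hM ht hdec hstep hg hfbar hgap
  have hsplit := card_filter_add_card_filter_not (s := {k ∈ range N | t k = 1})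
    (p := fun k => x (k + 1) = x k)
  simp only [filter_filter] at hsplit
  calc ∑ k ∈ range N, t k = #{k ∈ range N | t k = 1} := by
        rw [natCast_card_filter]
        refine sum_congr rfl fun k _ => ?_
        obtain h | h : t k = 0 ∨ t k = 1 := h01 k <;> simp [h]
    _ ≤ M + L := by rw [← hsplit]; push_cast; linarith

end Descent

lemma integral_eq_measureReal_of_mem_zero_one {Ω : Type*} [MeasurableSpace Ω] {μ : Measure Ω}
    {X : Ω → ℝ} (hX : Measurable X) (h01 : ∀ ω, X ω ∈ ({0, 1} : Set ℝ)) :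
    μ[X] = μ.real {ω | X ω = 1} :=
  calc μ[X] = ∫ ω, {ω | X ω = 1}.indicator 1 ω ∂μ := by
        refine integral_congr_ae <| ae_of_all _ fun ω => ?_
        obtain h | h : X ω = 0 ∨ X ω = 1 := h01 ω <;> simp [h]
    _ = μ.real {ω | X ω = 1} := integral_indicator_one (hX (measurableSet_singleton 1))

lemma measureReal_sum_le_le_exp_of_mem_zero_one {Ω ι : Type*} [MeasurableSpace Ω] {μ : Measure Ω}
    [IsProbabilityMeasure μ] [Fintype ι] {T : ι → Ω → ℝ} (hT : ∀ i, Measurable (T i))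
    (h01 : ∀ i ω, T i ω ∈ ({0, 1} : Set ℝ)) (hindep : iIndepFun T μ) {p γ : ℝ}
    (hp : 1 / 4 ≤ p) (hTp : ∀ i, p ≤ μ.real {ω | T i ω = 1}) (hγ : 0 ≤ γ) :
    μ.real {ω | ∑ i, T i ω ≤ (1 - γ) * p * Fintype.card ι}
      ≤ Real.exp (-(Fintype.card ι) * p * γ ^ 2 / 2) := by
  set n : ℝ := (Fintype.card ι : ℝ)
  have hmean : p * n ≤ ∑ i, μ[T i] := by
    simpa [integral_eq_measureReal_of_mem_zero_one (hT _) (h01 _), mul_comm] using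
      Finset.card_nsmul_le_sum Finset.univ _ p fun i _ => hTp i
  have hsubG : ∀ i ∈ Finset.univ, HasSubgaussianMGF (fun ω => μ[T i] - T i ω) (1 / 4) μ := by
    intro i _
    have := hasSubgaussianMGF_of_mem_Icc (μ := μ) (a := -1) (b := 0) (hT i).neg.aemeasurable <|
      ae_of_all _ fun ω => by obtain h | h : T i ω = 0 ∨ T i ω = 1 := h01 i ω <;> simp [h]
    convert this using 1
    · ext ω; simp [integral_neg]; ring
    · ext; norm_num
  have hoeff := HasSubgaussianMGF.measure_sum_ge_le_of_iIndepFun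
    (hindep.comp (fun i (x : ℝ) => μ[T i] - x) fun i => by fun_prop) hsubG
    (ε := γ * p * n) (by positivity)
  have hexp : -(γ * p * n) ^ 2 / (2 * (n * 4⁻¹)) = -2 * n * p ^ 2 * γ ^ 2 := by
    rcases eq_or_ne n 0 with hn | hn
    · simp [hn]
    · field_simp; ring
  calc μ.real {ω | ∑ i, T i ω ≤ (1 - γ) * p * n}
      ≤ μ.real {ω | γ * p * n ≤ ∑ i, (μ[T i] - T i ω)} := by
        refine measureReal_mono fun ω hω => ?_
        simp only [Set.mem_ofPred_eq, Finset.sum_sub_distrib] at hω ⊢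
        linarith
    -- Hoeffding with variance proxy `1/4` per summand; it beats the claimed rate as `p ≥ 1/4`.
    _ ≤ Real.exp (-2 * n * p ^ 2 * γ ^ 2) := by rw [← hexp]; simpa using hoeff
    _ ≤ Real.exp (-n * p * γ ^ 2 / 2) := by
        gcongr
        have hp₀ : 0 ≤ p := by linarith
        have : 0 ≤ n * p * γ ^ 2 * (4 * p - 1) := mul_nonneg (by positivity) (by linarith)
        linarith

theorem stmt_12_general {Ω : Type*} [MeasurableSpace Ω] (μ : Measure Ω) [IsProbabilityMeasure μ]
    {n : ℕ}
    (f : EuclideanSpace ℝ (Fin n) → ℝ)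
    (g : EuclideanSpace ℝ (Fin n) → EuclideanSpace ℝ (Fin n))
    (ρ τ : ℝ) (hρ : 0 < ρ) (hτ : 0 < τ)
    (fbar : ℝ) (L : ℝ)
    (δ : ℝ) (hδ1 : δ ≤ 1 / 2)
    (N : ℕ)
    (T : ℕ → Ω → ℝ) (hTmeas : ∀ k, Measurable (T k))
    (hBer : ∀ k ω, T k ω ∈ ({0, 1} : Set ℝ))
    (hindep : iIndepFun (fun k : Fin N => T k) μ)
    (hp : ∀ k < N, (μ {ω | T k ω = 1}).toReal ≥ 1 - δ)
    (X : ℕ → Ω → EuclideanSpace ℝ (Fin n))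
    (hdec : ∀ᵐ ω ∂μ, ∀ k < N,
      f (X k ω) - f (X (k + 1) ω) ≥ T k ω * ρ * ‖X (k + 1) ω - X k ω‖ ^ 2)
    (hstep : ∀ᵐ ω ∂μ, ∀ k < N,
      ‖X (k + 1) ω - X k ω‖ ≥ T k ω * τ * ‖g (X k ω)‖)
    (hfbar : ∀ y, f y ≥ fbar)
    (x0 : EuclideanSpace ℝ (Fin n)) (hX0 : ∀ ω, X 0 ω = x0)
    (hL' : ∀ᵐ ω ∂μ,
      (((Finset.range N).filter
          (fun k => T k ω = 1 ∧ X (k + 1) ω = X k ω)).card : ℝ) ≤ L)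
    (γ : ℝ) (hγ : γ ∈ Set.Ioo (0 : ℝ) 1)
    (hpos : (1 - γ) * (1 - δ) * (N : ℝ) - L > 0) :
    (μ {ω | (Finset.range (N + 1)).inf'
          (Finset.nonempty_range_iff.mpr (Nat.succ_ne_zero N))
          (fun k => ‖g (X k ω)‖)
        ≥ Real.sqrt ((f x0 - fbar) /
            (ρ * τ ^ 2 * ((1 - γ) * (1 - δ) * (N : ℝ) - L)))}).toReal
      ≤ Real.exp (-(N : ℝ) * (1 - δ) * γ ^ 2 / 2) := by
  set M := (1 - γ) * (1 - δ) * (N : ℝ) - L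
  set c := Real.sqrt ((f x0 - fbar) / (ρ * τ ^ 2 * M))
  have hgap : f x0 - fbar ≤ ρ * τ ^ 2 * c ^ 2 * M := by
    rw [Real.sq_sqrt (div_nonneg (sub_nonneg.2 (hfbar x0)) (by positivity))]
    exact le_of_eq (by field_simp)
  have hsub : {ω | c ≤ (Finset.range (N + 1)).inf'
      (Finset.nonempty_range_iff.mpr (Nat.succ_ne_zero N)) (fun k => ‖g (X k ω)‖)}
      ≤ᵐ[μ] {ω | ∑ k : Fin N, T k ω ≤ (1 - γ) * (1 - δ) * N} := by
    filter_upwards [hdec, hstep, hL'] with ω hd hs hl hmin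
    have := sum_range_le_of_forall_le_norm (x := fun k => X k ω) (hBer · ω) hρ hτ.le
      (Real.sqrt_nonneg _) hpos.le hd hs
      (fun k hk => hmin.trans (Finset.inf'_le _ (Finset.mem_range.2 (by omega))))
      (hfbar _) (by simpa only [hX0] using hgap) hl
    show ∑ k : Fin N, T k ω ≤ _
    rw [Fin.sum_univ_eq_sum_range (fun k => T k ω)]
    linarith
  have hchernoff := measureReal_sum_le_le_exp_of_mem_zero_one (T := fun k : Fin N => T k)
    (fun k => hTmeas k) (fun k => hBer k) hindep (p := 1 - δ) (by linarith)
    (fun k => hp k k.isLt) hγ.1.le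
  rw [Fintype.card_fin] at hchernoff
  exact (ENNReal.toReal_mono (measure_ne_top _ _) (measure_mono_ae hsub)).trans hchernoff

/-- High-probability bound on the minimal gradient norm after `N` iterations of a
stochastic Newton-type method. -/
theorem stmt_12 {Ω : Type*} [MeasurableSpace Ω] (μ : Measure Ω) [IsProbabilityMeasure μ]
    {n : ℕ}
    (f : EuclideanSpace ℝ (Fin n) → ℝ)
    (g : EuclideanSpace ℝ (Fin n) → EuclideanSpace ℝ (Fin n))
    (ρ τ : ℝ) (hρ : 0 < ρ) (hτ : 0 < τ)
    (fbar : ℝ) (L : ℝ) (hL : 0 ≤ L)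
    (δ : ℝ) (hδ0 : 0 ≤ δ) (hδ1 : δ ≤ 1 / 2)
    (N : ℕ)
    (T : ℕ → Ω → ℝ) (hTmeas : ∀ k, Measurable (T k))
    (hBer : ∀ k ω, T k ω ∈ ({0, 1} : Set ℝ))
    (hindep : iIndepFun (fun k : Fin N => T k) μ)
    (hp : ∀ k < N, (μ {ω | T k ω = 1}).toReal ≥ 1 - δ)
    (X : ℕ → Ω → EuclideanSpace ℝ (Fin n)) (hXmeas : ∀ k, Measurable (X k))
    (hdec : ∀ᵐ ω ∂μ, ∀ k < N,
      f (X k ω) - f (X (k + 1) ω) ≥ T k ω * ρ * ‖X (k + 1) ω - X k ω‖ ^ 2)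
    (hstep : ∀ᵐ ω ∂μ, ∀ k < N,
      ‖X (k + 1) ω - X k ω‖ ≥ T k ω * τ * ‖g (X k ω)‖)
    (hfbar : ∀ y, f y ≥ fbar)
    (x0 : EuclideanSpace ℝ (Fin n)) (hX0 : ∀ ω, X 0 ω = x0)
    (hL' : ∀ᵐ ω ∂μ,
      (((Finset.range N).filter
          (fun k => T k ω = 1 ∧ X (k + 1) ω = X k ω)).card : ℝ) ≤ L)
    (γ : ℝ) (hγ : γ ∈ Set.Ioo (0 : ℝ) 1)
    (hpos : (1 - γ) * (1 - δ) * (N : ℝ) - L > 0) :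
    (μ {ω | (Finset.range (N + 1)).inf'
          (Finset.nonempty_range_iff.mpr (Nat.succ_ne_zero N))
          (fun k => ‖g (X k ω)‖)
        ≥ Real.sqrt ((f x0 - fbar) /
            (ρ * τ ^ 2 * ((1 - γ) * (1 - δ) * (N : ℝ) - L)))}).toReal
      ≤ Real.exp (-(N : ℝ) * (1 - δ) * γ ^ 2 / 2) :=
  stmt_12_general μ f g ρ τ hρ hτ fbar L δ hδ1 N T hTmeas hBer hindep hp X hdec hstep hfbar x0 hX0
    hL' γ hγ hpos
end

section
/- Let U ⊆ ℝⁿ, F : U → ℝⁿ, x̄ ∈ U with F(x̄) = 0, and c > 0 such that ‖F(y) − H(y − x̄)‖ ≤ c·‖y − x̄‖ for all y ∈ U and all H in a set 𝓗F(y) ⊆ ℝ^{n×n}. Let y ∈ U, H ∈ 𝓗F(y), ε > 0, and let S ∈ ℝ^{d×n} be such that S·H·Sᵀ is invertible and the following three inequalities hold: (i) ‖Sᵀ·S·H·Sᵀ·S − H‖ ≤ ε; (ii) ‖y − x̄ − Sᵀ(S·H·Sᵀ)⁻¹·S·F(y)‖ ≤ (1 + ε)·‖S·y − S·x̄ − (S·H·Sᵀ)⁻¹·S·F(y)‖;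 (iii) ‖S·F(y) − (S·H·Sᵀ)·S·(y − x̄)‖ ≤ (1 + ε)·‖F(y) − Sᵀ·(S·H·Sᵀ)·S·(y − x̄)‖. Then y⁺ := y − Sᵀ(S·H·Sᵀ)⁻¹·S·F(y) satisfies ‖y⁺ − x̄‖ ≤ (1 + ε)²·(c + ε)·‖(S·H·Sᵀ)⁻¹‖·‖y − x̄‖. -/
/-- One-step contraction estimate for the sketched Newton-type method. -/
theorem stmt_14 {n d : ℕ}
    (U : Set (EuclideanSpace ℝ (Fin n)))
    (F : EuclideanSpace ℝ (Fin n) → EuclideanSpace ℝ (Fin n))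
    (xbar : EuclideanSpace ℝ (Fin n)) (hxbar : xbar ∈ U) (hFxbar : F xbar = 0)
    (HF : EuclideanSpace ℝ (Fin n) →
      Set (EuclideanSpace ℝ (Fin n) →L[ℝ] EuclideanSpace ℝ (Fin n)))
    (c : ℝ) (hc : 0 < c)
    (hND : ∀ y ∈ U, ∀ H ∈ HF y, ‖F y - H (y - xbar)‖ ≤ c * ‖y - xbar‖)
    (y : EuclideanSpace ℝ (Fin n)) (hy : y ∈ U)
    (H : EuclideanSpace ℝ (Fin n) →L[ℝ] EuclideanSpace ℝ (Fin n)) (hH : H ∈ HF y)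
    (ε : ℝ) (hε : 0 < ε)
    (S : EuclideanSpace ℝ (Fin n) →L[ℝ] EuclideanSpace ℝ (Fin d))
    (A : EuclideanSpace ℝ (Fin d) →L[ℝ] EuclideanSpace ℝ (Fin d))
    (hA : A = (S.comp H).comp (ContinuousLinearMap.adjoint S))
    (Ainv : EuclideanSpace ℝ (Fin d) →L[ℝ] EuclideanSpace ℝ (Fin d))
    (hAinv1 : A.comp Ainv = ContinuousLinearMap.id ℝ (EuclideanSpace ℝ (Fin d)))
    (hAinv2 : Ainv.comp A = ContinuousLinearMap.id ℝ (EuclideanSpace ℝ (Fin d)))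
    (h1 : ‖((ContinuousLinearMap.adjoint S).comp A).comp S - H‖ ≤ ε)
    (h2 : ‖y - xbar - (ContinuousLinearMap.adjoint S) (Ainv (S (F y)))‖
      ≤ (1 + ε) * ‖S y - S xbar - Ainv (S (F y))‖)
    (h3 : ‖S (F y) - A (S (y - xbar))‖
      ≤ (1 + ε) * ‖F y - (ContinuousLinearMap.adjoint S) (A (S (y - xbar)))‖)
    (yp : EuclideanSpace ℝ (Fin n))
    (hyp : yp = y - (ContinuousLinearMap.adjoint S) (Ainv (S (F y)))) :
    ‖yp - xbar‖ ≤ (1 + ε) ^ 2 * (c + ε) * ‖Ainv‖ * ‖y - xbar‖ := by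

  have hε0 : (0:ℝ) ≤ 1 + ε := by linarith
  set T := ContinuousLinearMap.adjoint S with hT
  have hv : yp - xbar = y - xbar - T (Ainv (S (F y))) := by rw [hyp]; abel
  have e1 : ‖yp - xbar‖ ≤ (1 + ε) * ‖S y - S xbar - Ainv (S (F y))‖ := by
    rw [hv]; exact h2
  have hinv : ∀ z, Ainv (A z) = z := fun z => by
    have := congrArg (fun f => f z) hAinv2
    simpa using this
  have e2 : S y - S xbar - Ainv (S (F y)) = Ainv (A (S (y - xbar)) - S (F y)) := by
    rw [map_sub Ainv, hinv, map_sub S]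
  have e3 : ‖S y - S xbar - Ainv (S (F y))‖ ≤ ‖Ainv‖ * ‖S (F y) - A (S (y - xbar))‖ := by
    rw [e2]
    calc ‖Ainv (A (S (y - xbar)) - S (F y))‖
        ≤ ‖Ainv‖ * ‖A (S (y - xbar)) - S (F y)‖ := Ainv.le_opNorm _
      _ = ‖Ainv‖ * ‖S (F y) - A (S (y - xbar))‖ := by rw [norm_sub_rev]
  have hnd := hND y hy H hH
  have hop : ‖((T.comp A).comp S - H) (y - xbar)‖ ≤ ε * ‖y - xbar‖ :=
    le_trans (((T.comp A).comp S - H).le_opNorm _)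
      (mul_le_mul_of_nonneg_right h1 (norm_nonneg _))
  have esplit : F y - T (A (S (y - xbar)))
      = (F y - H (y - xbar)) - (((T.comp A).comp S - H) (y - xbar)) := by
    simp only [ContinuousLinearMap.sub_apply, ContinuousLinearMap.comp_apply]
    abel
  have e4 : ‖F y - T (A (S (y - xbar)))‖ ≤ (c + ε) * ‖y - xbar‖ := by
    rw [esplit]
    calc ‖(F y - H (y - xbar)) - (((T.comp A).comp S - H) (y - xbar))‖
        ≤ ‖F y - H (y - xbar)‖ + ‖((T.comp A).comp S - H) (y - xbar)‖ := norm_sub_le _ _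
      _ ≤ c * ‖y - xbar‖ + ε * ‖y - xbar‖ := add_le_add hnd hop
      _ = (c + ε) * ‖y - xbar‖ := by ring
  have e5 : ‖S (F y) - A (S (y - xbar))‖ ≤ (1 + ε) * ((c + ε) * ‖y - xbar‖) :=
    le_trans h3 (mul_le_mul_of_nonneg_left e4 hε0)
  calc ‖yp - xbar‖ ≤ (1 + ε) * ‖S y - S xbar - Ainv (S (F y))‖ := e1
    _ ≤ (1 + ε) * (‖Ainv‖ * ‖S (F y) - A (S (y - xbar))‖) :=
        mul_le_mul_of_nonneg_left e3 hε0
    _ ≤ (1 + ε) * (‖Ainv‖ * ((1 + ε) * ((c + ε) * ‖y - xbar‖))) :=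
        mul_le_mul_of_nonneg_left
          (mul_le_mul_of_nonneg_left e5 (norm_nonneg _)) hε0
    _ = (1 + ε) ^ 2 * (c + ε) * ‖Ainv‖ * ‖y - xbar‖ := by ring
end

section
/- Let U ⊆ ℝⁿ, F : U → ℝⁿ, x̄ ∈ U with F(x̄) = 0, and c > 0 such that ‖F(y) − H(y − x̄)‖ ≤ c·‖y − x̄‖ for all y ∈ U and all H in a set 𝓗F(y) ⊆ ℝ^{n×n}. Fix y ∈ U, H ∈ 𝓗F(y), ε > 0, δ ∈ (0, 1), and let S be a random d×n matrix such that S·H·Sᵀ is almost surely invertible and with probability at least 1 − δ the following three inequalities hold simultaneously: (i) ‖Sᵀ·S·H·Sᵀ·S − H‖ ≤ ε; (ii) ‖y − x̄ − Sᵀ(S·H·Sᵀ)⁻¹·S·F(y)‖ ≤ (1 + ε)·‖S·y − S·x̄ − (S·H·Sᵀ)⁻¹·S·F(y)‖; (iii) ‖S·F(y) − (S·H·Sᵀ)·S·(y − x̄)‖ ≤ (1 + ε)·‖F(y) − Sᵀ·(S·H·Sᵀ)·S·(y − x̄)‖. Then, with y⁺ := y − Sᵀ(S·H·Sᵀ)⁻¹·S·F(y),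 ℙ( ‖y⁺ − x̄‖ ≤ (1 + ε)²·(c + ε)·‖(S·H·Sᵀ)⁻¹‖·‖y − x̄‖ ) ≥ 1 − δ. -/
open MeasureTheory

/-!
Off a null set the bound is deterministic. With `v = y - x̄` and `A = S H Sᵀ` invertible,
`S v - A⁻¹ S F(y) = A⁻¹ (A S v - S F(y))`; chaining (ii), (iii) and
`‖F(y) - Sᵀ A S v‖ ≤ ‖F(y) - H v‖ + ‖Sᵀ A S - H‖ ‖v‖ ≤ (c + ε) ‖v‖` (by (i)) gives the factor
`(1 + ε)² (c + ε) ‖A⁻¹‖`, so the event of (i)–(iii) is almost surely contained in the event of the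
conclusion.
-/

section SketchedNewtonStep

variable {𝕜 E G : Type*} [NontriviallyNormedField 𝕜]
  [NormedAddCommGroup E] [NormedSpace 𝕜 E] [NormedAddCommGroup G] [NormedSpace 𝕜 G]

theorem norm_sub_apply_le_add_opNorm_sub (T H : E →L[𝕜] G) (g : G) (v : E) :
    ‖g - T v‖ ≤ ‖g - H v‖ + ‖T - H‖ * ‖v‖ :=
  calc ‖g - T v‖ = ‖(g - H v) - (T - H) v‖ := by
        rw [sub_apply, sub_sub_sub_cancel_right]
    _ ≤ ‖g - H v‖ + ‖(T - H) v‖ := norm_sub_le _ _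
    _ ≤ ‖g - H v‖ + ‖T - H‖ * ‖v‖ := by gcongr; exact (T - H).le_opNorm v

theorem norm_sub_ringInverse_apply_le {A : G →L[𝕜] G} (hA : IsUnit A) (w u : G) :
    ‖w - Ring.inverse A u‖ ≤ ‖Ring.inverse A‖ * ‖u - A w‖ := by
  have hinv : Ring.inverse A (A w) = w := by
    change (Ring.inverse A * A) w = w
    rw [Ring.inverse_mul_cancel A hA]
    rfl
  calc ‖w - Ring.inverse A u‖ = ‖Ring.inverse A (u - A w)‖ := by
        rw [map_sub, hinv, ← norm_neg, neg_sub]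
    _ ≤ ‖Ring.inverse A‖ * ‖u - A w‖ := (Ring.inverse A).le_opNorm _

theorem norm_sub_sketchedNewtonStep_le {S : E →L[𝕜] G} {Q : G →L[𝕜] E} {A : G →L[𝕜] G}
    {H : E →L[𝕜] E} (hA : IsUnit A) {g v : E} {c ε : ℝ}
    (hH : ‖g - H v‖ ≤ c * ‖v‖)
    (happrox : ‖(Q.comp A).comp S - H‖ ≤ ε)
    (hlift : ‖v - Q (Ring.inverse A (S g))‖ ≤ (1 + ε) * ‖S v - Ring.inverse A (S g)‖)
    (hproj : ‖S g - A (S v)‖ ≤ (1 + ε) * ‖g - Q (A (S v))‖) :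
    ‖v - Q (Ring.inverse A (S g))‖ ≤ (1 + ε) ^ 2 * (c + ε) * ‖Ring.inverse A‖ * ‖v‖ := by
  have hε : 0 ≤ 1 + ε := by linarith [(norm_nonneg _).trans happrox]
  have hresidual : ‖g - Q (A (S v))‖ ≤ (c + ε) * ‖v‖ :=
    calc ‖g - Q (A (S v))‖ ≤ ‖g - H v‖ + ‖(Q.comp A).comp S - H‖ * ‖v‖ :=
          norm_sub_apply_le_add_opNorm_sub ((Q.comp A).comp S) H g v
      _ ≤ c * ‖v‖ + ε * ‖v‖ := by gcongr
      _ = (c + ε) * ‖v‖ := by ring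
  calc ‖v - Q (Ring.inverse A (S g))‖
      ≤ (1 + ε) * ‖S v - Ring.inverse A (S g)‖ := hlift
    _ ≤ (1 + ε) * (‖Ring.inverse A‖ * ‖S g - A (S v)‖) := by
        gcongr; exact norm_sub_ringInverse_apply_le hA _ _
    _ ≤ (1 + ε) * (‖Ring.inverse A‖ * ((1 + ε) * ((c + ε) * ‖v‖))) := by
        gcongr; exact hproj.trans (by gcongr)
    _ = (1 + ε) ^ 2 * (c + ε) * ‖Ring.inverse A‖ * ‖v‖ := by ring

end SketchedNewtonStep

theorem stmt_15_general {n d : ℕ}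
    {Ωp : Type*} [MeasurableSpace Ωp] (μ : Measure Ωp) [IsProbabilityMeasure μ]
    (U : Set (EuclideanSpace ℝ (Fin n)))
    (F : EuclideanSpace ℝ (Fin n) → EuclideanSpace ℝ (Fin n))
    (xbar : EuclideanSpace ℝ (Fin n))
    (HF : EuclideanSpace ℝ (Fin n) →
      Set (EuclideanSpace ℝ (Fin n) →L[ℝ] EuclideanSpace ℝ (Fin n)))
    (c : ℝ)
    (hND : ∀ y ∈ U, ∀ H ∈ HF y, ‖F y - H (y - xbar)‖ ≤ c * ‖y - xbar‖)
    (y : EuclideanSpace ℝ (Fin n)) (hy : y ∈ U)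
    (H : EuclideanSpace ℝ (Fin n) →L[ℝ] EuclideanSpace ℝ (Fin n)) (hH : H ∈ HF y)
    (ε : ℝ) (δ : ℝ)
    (Sr : Ωp → (EuclideanSpace ℝ (Fin n) →L[ℝ] EuclideanSpace ℝ (Fin d)))
    (A : Ωp → (EuclideanSpace ℝ (Fin d) →L[ℝ] EuclideanSpace ℝ (Fin d)))
    (hAunit : ∀ᵐ ω ∂μ, IsUnit (A ω))
    (hprob : 1 - δ ≤ (μ {ω |
      ‖((ContinuousLinearMap.adjoint (Sr ω)).comp (A ω)).comp (Sr ω) - H‖ ≤ ε ∧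
      ‖y - xbar - (ContinuousLinearMap.adjoint (Sr ω)) (Ring.inverse (A ω) (Sr ω (F y)))‖
        ≤ (1 + ε) * ‖Sr ω y - Sr ω xbar - Ring.inverse (A ω) (Sr ω (F y))‖ ∧
      ‖Sr ω (F y) - A ω (Sr ω (y - xbar))‖
        ≤ (1 + ε) * ‖F y - (ContinuousLinearMap.adjoint (Sr ω)) (A ω (Sr ω (y - xbar)))‖}).toReal)
    (yp : Ωp → EuclideanSpace ℝ (Fin n))
    (hyp : ∀ ω, yp ω = y - (ContinuousLinearMap.adjoint (Sr ω)) (Ring.inverse (A ω) (Sr ω (F y)))) :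
    1 - δ ≤ (μ {ω |
      ‖yp ω - xbar‖ ≤ (1 + ε) ^ 2 * (c + ε) * ‖Ring.inverse (A ω)‖ * ‖y - xbar‖}).toReal := by
  refine hprob.trans (ENNReal.toReal_mono (measure_ne_top μ _) (measure_mono_ae ?_))
  filter_upwards [hAunit] with ω hunit ⟨happrox, hlift, hproj⟩
  rw [← map_sub] at hlift
  change ‖yp ω - xbar‖ ≤ _
  rw [hyp ω, sub_right_comm]
  exact norm_sub_sketchedNewtonStep_le hunit (hND y hy H hH) happrox hlift hproj

/-- Probabilistic one-step contraction estimate for the sketched Newton-type method. -/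
theorem stmt_15 {n d : ℕ}
    {Ωp : Type*} [MeasurableSpace Ωp] (μ : Measure Ωp) [IsProbabilityMeasure μ]
    (U : Set (EuclideanSpace ℝ (Fin n)))
    (F : EuclideanSpace ℝ (Fin n) → EuclideanSpace ℝ (Fin n))
    (xbar : EuclideanSpace ℝ (Fin n)) (hxbar : xbar ∈ U) (hFxbar : F xbar = 0)
    (HF : EuclideanSpace ℝ (Fin n) →
      Set (EuclideanSpace ℝ (Fin n) →L[ℝ] EuclideanSpace ℝ (Fin n)))
    (c : ℝ) (hc : 0 < c)
    (hND : ∀ y ∈ U, ∀ H ∈ HF y, ‖F y - H (y - xbar)‖ ≤ c * ‖y - xbar‖)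
    (y : EuclideanSpace ℝ (Fin n)) (hy : y ∈ U)
    (H : EuclideanSpace ℝ (Fin n) →L[ℝ] EuclideanSpace ℝ (Fin n)) (hH : H ∈ HF y)
    (ε : ℝ) (hε : 0 < ε) (δ : ℝ) (hδ : δ ∈ Set.Ioo (0 : ℝ) 1)
    (Sr : Ωp → (EuclideanSpace ℝ (Fin n) →L[ℝ] EuclideanSpace ℝ (Fin d)))
    (A : Ωp → (EuclideanSpace ℝ (Fin d) →L[ℝ] EuclideanSpace ℝ (Fin d)))
    (hA : ∀ ω, A ω = ((Sr ω).comp H).comp (ContinuousLinearMap.adjoint (Sr ω)))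
    (hAunit : ∀ᵐ ω ∂μ, IsUnit (A ω))
    (hprob : 1 - δ ≤ (μ {ω |
      ‖((ContinuousLinearMap.adjoint (Sr ω)).comp (A ω)).comp (Sr ω) - H‖ ≤ ε ∧
      ‖y - xbar - (ContinuousLinearMap.adjoint (Sr ω)) (Ring.inverse (A ω) (Sr ω (F y)))‖
        ≤ (1 + ε) * ‖Sr ω y - Sr ω xbar - Ring.inverse (A ω) (Sr ω (F y))‖ ∧
      ‖Sr ω (F y) - A ω (Sr ω (y - xbar))‖
        ≤ (1 + ε) * ‖F y - (ContinuousLinearMap.adjoint (Sr ω)) (A ω (Sr ω (y - xbar)))‖}).toReal)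
    (yp : Ωp → EuclideanSpace ℝ (Fin n))
    (hyp : ∀ ω, yp ω = y - (ContinuousLinearMap.adjoint (Sr ω)) (Ring.inverse (A ω) (Sr ω (F y)))) :
    1 - δ ≤ (μ {ω |
      ‖yp ω - xbar‖ ≤ (1 + ε) ^ 2 * (c + ε) * ‖Ring.inverse (A ω)‖ * ‖y - xbar‖}).toReal :=
  stmt_15_general μ U F xbar HF c hND y hy H hH ε δ Sr A hAunit hprob yp hyp
end
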